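/- arXiv:2412.14641 — 6 statements merged into one kernel-verified Lean document; each statement's English description precedes it below -/
import Mathlib

section
/- Let m be a positive integer and q = 2^m. The pentanomial f(x) = x^{96q+1} + x^{65q+32} + x^{33q+64} + x^{32q+65} + x^{97} is a permutation polynomial of the finite field F_{q^2} if and only if m is not divisible by 24. -/
/-!
Let `σ x = x ^ q` and let `ω` be a primitive cube root of unity in `F`. In characteristic 2,
Frobenius gives `(ω² x + ω y)⁹⁷ = ω² g(x, y) + ω g(y, x)` for
`g(x, y) = x y⁹⁶ + x³² y⁶⁵ + x⁶⁴ y³³ + x⁶⁵ y³² + x⁹⁷`, and `f(x) = g(x, σ x)`.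
Applied to both cube roots `ω` and `ω + 1`, this shows that the 97th powers of the two
coordinates `ω'² x + ω' σ x` of `x` are determined by `f(x)` and `σ(f(x))`, so `f` is injective
as soon as `z ↦ z⁹⁷` is, that is, when `97 ∤ q² - 1`, i.e. `24 ∤ m`.
If `24 ∣ m` then `σ` fixes `ω`, `τ x = ω² x + ω σ x` is an involution and `f = τ ∘ (·)⁹⁷ ∘ τ`,
which is not injective because `F` contains a nontrivial 97th root of unity.
-/

open Function

def pentanomialForm {R : Type*} [CommRing R] (x y : R) : R :=
  x * y ^ 96 + x ^ 32 * y ^ 65 + x ^ 64 * y ^ 33 + x ^ 65 * y ^ 32 + x ^ 97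

theorem pentanomial_eq_pentanomialForm {R : Type*} [CommRing R] (q : ℕ) (x : R) :
    x ^ (96 * q + 1) + x ^ (65 * q + 32) + x ^ (33 * q + 64) + x ^ (32 * q + 65) + x ^ 97 =
      pentanomialForm x (x ^ q) := by
  simp only [pentanomialForm, pow_add, pow_mul']
  ring

section CubeRootOfUnity

variable {R : Type*} [CommRing R] (σ : R →+* R)

theorem pentanomialForm_map (hσ : Involutive σ) (x : R) :
    σ (pentanomialForm x (σ x)) = pentanomialForm (σ x) x := by
  simp only [pentanomialForm, map_add, map_mul, map_pow, hσ x]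

variable [CharP R 2] {ω : R}

theorem sq_mul_add_mul_pow_97 (hω : ω ^ 2 + ω + 1 = 0) (x y : R) :
    (ω ^ 2 * x + ω * y) ^ 97 = ω ^ 2 * pentanomialForm x y + ω * pentanomialForm y x := by
  have hω3 : ω ^ 3 = 1 := by linear_combination (ω - 1) * hω
  have frobenius_pow (k : ℕ) : (ω ^ 2 * x + ω * y) ^ 2 ^ k =
      ω ^ (2 ^ (k + 1) % 3) * x ^ 2 ^ k + ω ^ (2 ^ k % 3) * y ^ 2 ^ k := by
    rw [add_pow_char_pow, mul_pow, mul_pow, ← pow_mul, ← pow_succ', ← pow_eq_pow_mod _ hω3,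
      ← pow_eq_pow_mod _ hω3]
  calc (ω ^ 2 * x + ω * y) ^ 97
      = (ω ^ 2 * x + ω * y) ^ 2 ^ 6 * (ω ^ 2 * x + ω * y) ^ 2 ^ 5 * (ω ^ 2 * x + ω * y) := by
        ring
    _ = (ω ^ 2 * x ^ 64 + ω * y ^ 64) * (ω * x ^ 32 + ω ^ 2 * y ^ 32) * (ω ^ 2 * x + ω * y) := by
        rw [frobenius_pow, frobenius_pow]; norm_num
    _ = ω ^ 2 * pentanomialForm x y + ω * pentanomialForm y x := by
        rw [pentanomialForm, pentanomialForm]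
        grind

def cubeTwist (ω x : R) : R :=
  ω ^ 2 * x + ω * σ x

theorem cubeTwist_pow_97 (hω : ω ^ 2 + ω + 1 = 0) (hσ : Involutive σ) (x : R) :
    cubeTwist σ ω x ^ 97 =
      ω ^ 2 * pentanomialForm x (σ x) + ω * σ (pentanomialForm x (σ x)) := by
  rw [cubeTwist, sq_mul_add_mul_pow_97 hω, pentanomialForm_map σ hσ]

theorem eq_add_cubeTwist (hω : ω ^ 2 + ω + 1 = 0) (x : R) :
    x = (ω + 1) * cubeTwist σ ω x + ω * cubeTwist σ (ω + 1) x := by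
  rw [cubeTwist, cubeTwist]
  grind

theorem pentanomialForm_injective (hω : ω ^ 2 + ω + 1 = 0) (hσ : Involutive σ)
    (h97 : Injective (· ^ 97 : R → R)) : Injective fun x => pentanomialForm x (σ x) := by
  intro x y (hxy : pentanomialForm x (σ x) = pentanomialForm y (σ y))
  have hcoord {ω' : R} (hω' : ω' ^ 2 + ω' + 1 = 0) : cubeTwist σ ω' x = cubeTwist σ ω' y :=
    h97 <| by simp only [cubeTwist_pow_97 σ hω' hσ, hxy]
  have hω' : (ω + 1) ^ 2 + (ω + 1) + 1 = 0 := by grind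
  rw [eq_add_cubeTwist σ hω x, eq_add_cubeTwist σ hω y, hcoord hω, hcoord hω']

theorem cubeTwist_involutive (hω : ω ^ 2 + ω + 1 = 0) (hσ : Involutive σ) (hσω : σ ω = ω) :
    Involutive (cubeTwist σ ω) := by
  intro x
  simp only [cubeTwist, map_add, map_mul, map_pow, hσω, hσ x]
  grind

theorem pentanomialForm_eq_cubeTwist_conj (hω : ω ^ 2 + ω + 1 = 0) (hσ : Involutive σ)
    (hσω : σ ω = ω) (x : R) :
    pentanomialForm x (σ x) = cubeTwist σ ω (cubeTwist σ ω x ^ 97) := by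
  rw [cubeTwist_pow_97 σ hω hσ, cubeTwist, map_add, map_mul, map_mul, map_pow, hσω, hσ]
  grind

theorem pentanomialForm_injective_iff (hω : ω ^ 2 + ω + 1 = 0) (hσ : Involutive σ)
    (hσω : σ ω = ω) :
    Injective (fun x => pentanomialForm x (σ x)) ↔ Injective (· ^ 97 : R → R) := by
  have hτ := cubeTwist_involutive σ hω hσ hσω
  have hconj : (fun x => pentanomialForm x (σ x)) = cubeTwist σ ω ∘ (· ^ 97) ∘ cubeTwist σ ω :=
    funext (pentanomialForm_eq_cubeTwist_conj σ hω hσ hσω)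
  rw [hconj, hτ.injective.of_comp_iff, Injective.of_comp_iff' _ hτ.bijective]

end CubeRootOfUnity

section FiniteField

variable {F : Type*} [Field F] [Finite F]

theorem exists_pow_eq_one_ne_one {p : ℕ} (hp : p.Prime) (h : p ∣ Nat.card F - 1) :
    ∃ ζ : F, ζ ^ p = 1 ∧ ζ ≠ 1 := by
  have := Fact.mk hp
  obtain ⟨ζ, hζ⟩ := exists_prime_orderOf_dvd_card' (G := Fˣ) p (by rwa [Nat.card_units])
  refine ⟨ζ, by rw [← Units.val_pow_eq_pow_val, ← hζ, pow_orderOf_eq_one, Units.val_one], ?_⟩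
  rw [Ne, Units.val_eq_one, ← orderOf_eq_one_iff, hζ]
  exact hp.ne_one

theorem pow_injective_iff_not_dvd {p : ℕ} (hp : p.Prime) :
    Injective (· ^ p : F → F) ↔ ¬ p ∣ Nat.card F - 1 := by
  refine ⟨fun hinj hdvd => ?_, fun hndvd x y hxy => ?_⟩
  · obtain ⟨ζ, hζ, hζ1⟩ := exists_pow_eq_one_ne_one hp hdvd
    exact hζ1 (hinj (hζ.trans (one_pow p).symm))
  · have hcop : (Nat.card Fˣ).Coprime p := by
      rw [Nat.card_units]; exact Nat.coprime_comm.mp (hp.coprime_iff_not_dvd.mpr hndvd)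
    rcases eq_or_ne x 0 with rfl | hx
    · exact ((pow_eq_zero_iff hp.ne_zero).mp (hxy.symm.trans (zero_pow hp.ne_zero))).symm
    rcases eq_or_ne y 0 with rfl | hy
    · exact (pow_eq_zero_iff hp.ne_zero).mp (hxy.trans (zero_pow hp.ne_zero))
    have := hcop.pow_left_bijective.injective (a₁ := Units.mk0 x hx) (a₂ := Units.mk0 y hy)
      (Units.ext (by simpa using hxy))
    simpa using congrArg Units.val this

theorem exists_sq_add_self_add_one_eq_zero (h : 3 ∣ Nat.card F - 1) :
    ∃ ω : F, ω ^ 2 + ω + 1 = 0 := by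
  obtain ⟨ω, hω3, hω1⟩ := exists_pow_eq_one_ne_one Nat.prime_three h
  refine ⟨ω, (mul_eq_zero.mp ?_).resolve_left (sub_ne_zero.mpr hω1)⟩
  linear_combination hω3

theorem charP_two_of_card_eq_two_pow {n : ℕ} (h : Nat.card F = 2 ^ n) : CharP F 2 := by
  have := Fintype.ofFinite F
  obtain ⟨p, hp⟩ := CharP.exists F
  obtain ⟨k, hprime, hcard⟩ := FiniteField.card F p
  rw [← Nat.card_eq_fintype_card, h] at hcard
  have hdvd : p ∣ 2 ^ n := hcard ▸ dvd_pow_self p k.ne_zero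
  rwa [(Nat.prime_dvd_prime_iff_eq hprime Nat.prime_two).mp (hprime.dvd_of_dvd_pow hdvd)] at hp

theorem iterateFrobenius_involutive {p n : ℕ} [ExpChar F p] (h : Nat.card F = (p ^ n) ^ 2) :
    Involutive (iterateFrobenius F p n) := by
  have := Fintype.ofFinite F
  intro x
  rw [iterateFrobenius_def, iterateFrobenius_def, ← pow_mul, ← sq, ← h, Nat.card_eq_fintype_card,
    FiniteField.pow_card]

end FiniteField

theorem pow_two_pow_eq_self_of_even {M : Type*} [Monoid M] {ω : M} (hω : ω ^ 3 = 1) {n : ℕ}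
    (hn : Even n) : ω ^ 2 ^ n = ω := by
  obtain ⟨k, rfl⟩ := hn
  rw [pow_eq_pow_mod _ hω, ← two_mul, pow_mul, Nat.pow_mod]
  norm_num

theorem ninetySeven_dvd_two_pow_sub_one_iff (n : ℕ) : 97 ∣ 2 ^ n - 1 ↔ 48 ∣ n := by
  have horder : orderOf (2 : ZMod 97) = 48 := by
    rw [orderOf_eq_iff (by norm_num)]
    decide
  rw [← ZMod.natCast_eq_zero_iff, Nat.cast_sub Nat.one_le_two_pow, sub_eq_zero, ← horder,
    orderOf_dvd_iff_pow_eq_one]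
  push_cast
  rfl

theorem pentanomial_family17_perm_iff_general
    (m : ℕ) (q : ℕ) (hq : q = 2 ^ m)
    (F : Type*) [Field F] [Fintype F] (hF : Fintype.card F = q ^ 2) :
    Function.Bijective (fun x : F =>
      x ^ (96 * q + 1) + x ^ (65 * q + 32) + x ^ (33 * q + 64) +
        x ^ (32 * q + 65) + x ^ 97) ↔ ¬ (24 ∣ m) := by
  subst hq
  have hcard : Nat.card F = 2 ^ (2 * m) := by rw [Nat.card_eq_fintype_card, hF, ← pow_mul']
  have := charP_two_of_card_eq_two_pow hcard
  obtain ⟨ω, hω⟩ := exists_sq_add_self_add_one_eq_zero (F := F) <| by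
    rw [hcard, pow_mul]; simpa using Nat.sub_dvd_pow_sub_pow 4 1 m
  have hσ : Involutive (iterateFrobenius F 2 m) :=
    iterateFrobenius_involutive (by rw [hcard, pow_mul'])
  have h97 : Injective (· ^ 97 : F → F) ↔ ¬ 24 ∣ m := by
    rw [pow_injective_iff_not_dvd (by norm_num), hcard, ninetySeven_dvd_two_pow_sub_one_iff]
    omega
  simp only [pentanomial_eq_pentanomialForm, ← iterateFrobenius_def 2 m]
  rw [← Finite.injective_iff_bijective]
  refine ⟨fun hinj h24 => ?_, fun h24 => pentanomialForm_injective _ hω hσ (h97.mpr h24)⟩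
  have hσω : iterateFrobenius F 2 m ω = ω := by
    rw [iterateFrobenius_def]
    exact pow_two_pow_eq_self_of_even (by linear_combination (ω - 1) * hω)
      (even_iff_two_dvd.mpr ((by norm_num : 2 ∣ 24).trans h24))
  exact h97.mp ((pentanomialForm_injective_iff _ hω hσ hσω).mp hinj) h24

/-- Theorem 1.1: Let `q = 2^m`. Then
`f(x) = x^{96q+1} + x^{65q+32} + x^{33q+64} + x^{32q+65} + x^{97}`
permutes `F_{q^2}` if and only if `m ≢ 0 (mod 24)`. -/
theorem pentanomial_family17_perm_iff
    (m : ℕ) (hm : 0 < m) (q : ℕ) (hq : q = 2 ^ m)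
    (F : Type*) [Field F] [Fintype F] (hF : Fintype.card F = q ^ 2) :
    Function.Bijective (fun x : F =>
      x ^ (96 * q + 1) + x ^ (65 * q + 32) + x ^ (33 * q + 64) +
        x ^ (32 * q + 65) + x ^ 97) ↔ ¬ (24 ∣ m) :=
  pentanomial_family17_perm_iff_general m q hq F hF
end

section
/- Suppose m is odd and i·j is odd. Then f_A is linear equivalent over F_q to the map (u,v) ↦ (u^{Q1+Q2+1}, v^{Q1+Q2+1}) on F_q × F_q; that is, there exist F_q-linear bijections L1 : F_q × F_q → F_{q^2} and L2 : F_{q^2} → F_q × F_q such that for all x in F_{q^2}, f_A(x) = L1(u^{Q1+Q2+1}, v^{Q1+Q2+1}) where (u,v) = L2(x). -/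
section Aux

variable {F : Type*} [Field F]

private lemma pow_four_pow (w : F) (hw3 : w ^ 3 = 1) (n : ℕ) : w ^ (4 ^ n) = w := by
  induction n with
  | zero => simp
  | succ n ih =>
    rw [pow_succ, pow_mul, ih, show (4 : ℕ) = 3 + 1 by rfl, pow_add, hw3, pow_one, one_mul]

private lemma pow_two_pow_odd (w : F) (hw3 : w ^ 3 = 1) {k : ℕ} (hk : Odd k) :
    w ^ (2 ^ k) = w ^ 2 := by
  obtain ⟨n, rfl⟩ := hk
  have h : (2 : ℕ) ^ (2 * n + 1) = 4 ^ n * 2 := by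
    rw [pow_succ, pow_mul]; norm_num
  rw [h, pow_mul, pow_four_pow w hw3 n]

private lemma pow_two_pow_odd' (w : F) (hw3 : w ^ 3 = 1) {k : ℕ} (hk : Odd k) :
    (w ^ 2) ^ (2 ^ k) = w := by
  rw [← pow_mul, mul_comm, pow_mul, pow_two_pow_odd w hw3 hk, ← pow_mul]
  calc w ^ (2 * 2) = w ^ 3 * w := by ring
  _ = w := by rw [hw3, one_mul]

/-- The core polynomial identity, valid modulo `w^2 + w + 1` in characteristic 2. -/
private lemma keycalc (w A B C D R T : F) (hw : w ^ 2 + w + 1 = 0) (h2 : (2 : F) = 0) :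
    (w*A + w^2*B) * (w*C + w^2*D) * (w*R + w^2*T)
      + (w*A + w^2*B) * (w^2*R + w*T) * (w^2*C + w*D)
      + (w*C + w^2*D) * (w^2*R + w*T) * (w^2*A + w*B)
      + (w^2*A + w*B) * (w^2*C + w*D) * (w^2*R + w*T)
      + (w^2*A + w*B) * (w^2*C + w*D) * (w*R + w^2*T)
    = w^2 * (A*C*R) + w * (B*D*T) := by
  linear_combination
    ((-2)*B*D*T + 2*B*D*R + 2*B*C*T + 2*A*D*T - w*B*D*T + (-2)*w*B*C*R + (-2)*w*A*D*R
      + (-2)*w*A*C*T + 2*w*A*C*R + 3*w^2*B*D*T + (-2)*w^2*B*D*R + (-2)*w^2*B*C*T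
      + 2*w^2*B*C*R + (-2)*w^2*A*D*T + 2*w^2*A*D*R + 2*w^2*A*C*T + (-3)*w^2*A*C*R
      - w^3*B*D*T + 3*w^3*B*D*R + 3*w^3*B*C*T + 3*w^3*A*D*T + 2*w^3*A*C*R + w^4*B*D*T
      + w^4*B*C*R + w^4*A*D*R + w^4*A*C*T + w^4*A*C*R) * hw
    + (B*D*T - B*D*R - B*C*T - A*D*T + w*B*D*T - w*B*D*R - w*B*C*T + w*B*C*R - w*A*D*T
      + w*A*D*R + w*A*C*T - w*A*C*R) * h2

/-- Main computation: value of `f_A` on `w*R + w^2*T` where `R, T` are fixed by the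
`q`-power Frobenius. -/
private lemma main_calc [CharP F 2] (m i j : ℕ) (hm : Odd m) (hi : Odd i) (hj : Odd j)
    (w R T : F) (hw : w ^ 2 + w + 1 = 0) (hR : R ^ (2 ^ m) = R) (hT : T ^ (2 ^ m) = T) :
    (w*R + w^2*T) ^ (2^m * (2^i + 2^j) + 1) + (w*R + w^2*T) ^ (2^m * (2^i + 1) + 2^j)
      + (w*R + w^2*T) ^ (2^m * (2^j + 1) + 2^i) + (w*R + w^2*T) ^ (2^i + 2^j + 2^m)
      + (w*R + w^2*T) ^ (2^i + 2^j + 1)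
    = w^2 * R ^ (2^i + 2^j + 1) + w * T ^ (2^i + 2^j + 1) := by
  haveI : Fact (Nat.Prime 2) := ⟨Nat.prime_two⟩
  have h2 : (2 : F) = 0 := by exact_mod_cast CharP.cast_eq_zero F 2
  have hw3 : w ^ 3 = 1 := by linear_combination (w - 1) * hw
  set x : F := w*R + w^2*T with hxdef
  have frob : ∀ (k : ℕ) (a b : F),
      (w*a + w^2*b) ^ (2^k) = w^(2^k) * a^(2^k) + (w^2)^(2^k) * b^(2^k) := by
    intro k a b
    rw [add_pow_char_pow, mul_pow, mul_pow]
  have frob' : ∀ (k : ℕ) (a b : F),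
      (w^2*a + w*b) ^ (2^k) = (w^2)^(2^k) * a^(2^k) + w^(2^k) * b^(2^k) := by
    intro k a b
    rw [add_pow_char_pow, mul_pow, mul_pow]
  have hxi : x ^ (2^i) = w^2 * R^(2^i) + w * T^(2^i) := by
    rw [hxdef, frob, pow_two_pow_odd w hw3 hi, pow_two_pow_odd' w hw3 hi]
  have hxj : x ^ (2^j) = w^2 * R^(2^j) + w * T^(2^j) := by
    rw [hxdef, frob, pow_two_pow_odd w hw3 hj, pow_two_pow_odd' w hw3 hj]
  have hxq : x ^ (2^m) = w^2 * R + w * T := by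
    rw [hxdef, frob, pow_two_pow_odd w hw3 hm, pow_two_pow_odd' w hw3 hm, hR, hT]
  have hyi : (x ^ (2^m)) ^ (2^i) = w * R^(2^i) + w^2 * T^(2^i) := by
    rw [hxq, frob', pow_two_pow_odd w hw3 hi, pow_two_pow_odd' w hw3 hi]
  have hyj : (x ^ (2^m)) ^ (2^j) = w * R^(2^j) + w^2 * T^(2^j) := by
    rw [hxq, frob', pow_two_pow_odd w hw3 hj, pow_two_pow_odd' w hw3 hj]
  have e1 : x ^ (2^m * (2^i + 2^j) + 1)
      = (x ^ (2^m)) ^ (2^i) * ((x ^ (2^m)) ^ (2^j) * x) := by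
    rw [← pow_mul, ← pow_mul, ← pow_succ, ← pow_add]
    ring_nf
  have e2 : x ^ (2^m * (2^i + 1) + 2^j)
      = (x ^ (2^m)) ^ (2^i) * (x ^ (2^m) * x ^ (2^j)) := by
    rw [← pow_mul, ← pow_add, ← pow_add]
    ring_nf
  have e3 : x ^ (2^m * (2^j + 1) + 2^i)
      = (x ^ (2^m)) ^ (2^j) * (x ^ (2^m) * x ^ (2^i)) := by
    rw [← pow_mul, ← pow_add, ← pow_add]
    ring_nf
  have e4 : x ^ (2^i + 2^j + 2^m) = x ^ (2^i) * (x ^ (2^j) * x ^ (2^m)) := by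
    rw [← pow_add, ← pow_add, add_assoc]
  have e5 : x ^ (2^i + 2^j + 1) = x ^ (2^i) * (x ^ (2^j) * x) := by
    rw [← pow_succ, ← pow_add]
    ring_nf
  have eR : R ^ (2^i + 2^j + 1) = R^(2^i) * R^(2^j) * R := by
    rw [pow_add, pow_add, pow_one]
  have eT : T ^ (2^i + 2^j + 1) = T^(2^i) * T^(2^j) * T := by
    rw [pow_add, pow_add, pow_one]
  rw [e1, e2, e3, e4, e5, eR, eT, hyi, hyj, hxq, hxi, hxj, hxdef]
  have key := keycalc w (R^(2^i)) (T^(2^i)) (R^(2^j)) (T^(2^j)) R T hw h2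
  linear_combination key

end Aux

/-- Theorem A, case (i), linear equivalence part: for `m` odd and `i·j` odd,
`f_A` is linear equivalent over `F_q` to `(u, v) ↦ (u^{Q1+Q2+1}, v^{Q1+Q2+1})`
on `F_q × F_q`. -/
theorem fA_linear_equiv_of_odd
    (m i j : ℕ) (hm : 0 < m) (hi : 0 < i) (hj : 0 < j)
    (q Q1 Q2 : ℕ) (hq : q = 2 ^ m) (hQ1 : Q1 = 2 ^ i) (hQ2 : Q2 = 2 ^ j)
    (K F : Type*) [Field K] [Fintype K] [Field F] [Fintype F] [Algebra K F]
    (hK : Fintype.card K = q) (hF : Fintype.card F = q ^ 2)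
    (hmo : Odd m) (hij : Odd (i * j)) :
    ∃ (L1 : (K × K) ≃ₗ[K] F) (L2 : F ≃ₗ[K] (K × K)),
      ∀ x : F,
        x ^ (q * (Q1 + Q2) + 1) + x ^ (q * (Q1 + 1) + Q2) + x ^ (q * (Q2 + 1) + Q1) +
          x ^ (Q1 + Q2 + q) + x ^ (Q1 + Q2 + 1) =
        L1 ((L2 x).1 ^ (Q1 + Q2 + 1), (L2 x).2 ^ (Q1 + Q2 + 1)) := by
  subst hq hQ1 hQ2
  obtain ⟨hio, hjo⟩ := Nat.odd_mul.mp hij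
  haveI : Fact (Nat.Prime 2) := ⟨Nat.prime_two⟩
  -- characteristic 2
  have hcardF : Fintype.card F = 2 ^ (2 * m) := by rw [hF, ← pow_mul, mul_comm]
  have h2F : (2 : F) = 0 := by
    have h0 : ((Fintype.card F : ℕ) : F) = 0 := FiniteField.cast_card_eq_zero F
    rw [hcardF] at h0
    push_cast at h0
    exact (pow_eq_zero_iff (Nat.mul_pos two_pos hm).ne').mp h0
  haveI hchar : CharP F 2 := by
    have hdvd : ringChar F ∣ 2 := ringChar.dvd (by exact_mod_cast h2F)
    have h1 : ringChar F ≠ 1 := by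
      intro h
      have := CharP.cast_eq_zero F (ringChar F)
      rw [h] at this
      simp at this
    have h2 : ringChar F = 2 := by
      rcases (Nat.prime_two).eq_one_or_self_of_dvd _ hdvd with h | h
      · exact absurd h h1
      · exact h
    exact ringChar.eq_iff.mp h2
  -- a primitive cube root of unity
  haveI : DecidableEq F := Classical.decEq F
  have h3 : (3 : ℕ) ∣ Fintype.card Fˣ := by
    rw [Fintype.card_units, hcardF]
    have h4 : (2 : ℕ) ^ (2 * m) = 4 ^ m := by rw [pow_mul]; norm_num
    rw [h4]
    simpa using Nat.sub_dvd_pow_sub_pow 4 1 m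
  obtain ⟨ζ, hζ⟩ := exists_prime_orderOf_dvd_card 3 h3
  set w : F := (ζ : F) with hwdef
  have hw3 : w ^ 3 = 1 := by
    have h : ζ ^ 3 = 1 := by rw [← hζ]; exact pow_orderOf_eq_one ζ
    rw [hwdef, ← Units.val_pow_eq_pow_val, h, Units.val_one]
  have hwne1 : w ≠ 1 := by
    intro h
    have h' : ζ = 1 := Units.ext h
    rw [h', orderOf_one] at hζ
    omega
  have hwne0 : w ≠ 0 := by
    intro h
    rw [h] at hw3
    simp at hw3
  have hw : w ^ 2 + w + 1 = 0 := by
    have hfac : (w - 1) * (w ^ 2 + w + 1) = 0 := by linear_combination hw3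
    rcases mul_eq_zero.mp hfac with h | h
    · exact absurd (sub_eq_zero.mp h) hwne1
    · exact h
  set φ : K →+* F := algebraMap K F with hφdef
  have hKfix : ∀ c : K, (φ c) ^ (2 ^ m) = φ c := by
    intro c
    rw [← map_pow]
    congr 1
    have h := FiniteField.pow_card c
    rwa [hK] at h
  have hwrange : ∀ c : K, φ c ≠ w := by
    intro c hc
    have h1 : w ^ (2 ^ m) = w := by rw [← hc, hKfix]
    rw [pow_two_pow_odd w hw3 hmo] at h1
    have h2 : w * (w - 1) = 0 := by linear_combination h1
    rcases mul_eq_zero.mp h2 with h | h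
    · exact hwne0 h
    · exact hwne1 (sub_eq_zero.mp h)
  -- the linear map
  let L : (K × K) →ₗ[K] F :=
    { toFun := fun p => w * φ p.1 + w ^ 2 * φ p.2
      map_add' := by
        intro p q
        simp only [Prod.fst_add, Prod.snd_add, map_add]
        ring
      map_smul' := by
        intro c p
        show w * φ (c • p).1 + w ^ 2 * φ (c • p).2 = c • (w * φ p.1 + w ^ 2 * φ p.2)
        rw [Prod.smul_fst, Prod.smul_snd, smul_eq_mul, smul_eq_mul, map_mul, map_mul, smul_add,
          Algebra.smul_def, Algebra.smul_def, ← hφdef]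
        ring }
  have hker : ∀ p : K × K, L p = 0 → p = 0 := by
    intro p hp
    have hp' : w * φ p.1 + w ^ 2 * φ p.2 = 0 := hp
    by_cases hc : p.1 + p.2 = 0
    · have h12 : φ p.1 + φ p.2 = 0 := by rw [← map_add, hc, map_zero]
      have hz : (w ^ 2 - w) * φ p.2 = 0 := by linear_combination hp' - w * h12
      have hne : w ^ 2 - w ≠ 0 := by
        have : w ^ 2 - w = w * (w - 1) := by ring
        rw [this]
        exact mul_ne_zero hwne0 (sub_ne_zero.mpr hwne1)
      have hp2 : φ p.2 = 0 := by
        rcases mul_eq_zero.mp hz with h | h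
        · exact absurd h hne
        · exact h
      have hp2' : p.2 = 0 := φ.injective (by rw [hp2, map_zero])
      have hp1' : p.1 = 0 := by
        have := hc
        rw [hp2', add_zero] at this
        exact this
      exact Prod.ext hp1' hp2'
    · exfalso
      have hc' : φ (p.1 + p.2) ≠ 0 := fun h => hc (φ.injective (by rw [h, map_zero]))
      have hstep : w * φ (p.1 + p.2) = φ p.2 := by
        rw [map_add]
        linear_combination hp' - φ p.2 * hw + w * φ p.2 * h2F
      have heq : w = φ (p.2 / (p.1 + p.2)) := by
        rw [map_div₀]
        exact (eq_div_iff hc').mpr hstep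
      exact hwrange _ heq.symm
  have hinj : Function.Injective L := by
    rw [injective_iff_map_eq_zero]
    exact hker
  have hcard : Fintype.card (K × K) = Fintype.card F := by
    rw [Fintype.card_prod, hK, hF]
    ring
  have hbij : Function.Bijective L := (Fintype.bijective_iff_injective_and_card L).mpr ⟨hinj, hcard⟩
  let e : (K × K) ≃ₗ[K] F := LinearEquiv.ofBijective L hbij
  refine ⟨(LinearEquiv.prodComm K K K).trans e, e.symm, ?_⟩
  intro x
  set p : K × K := e.symm x with hp
  have hx : x = w * φ p.1 + w ^ 2 * φ p.2 := by
    have h := e.apply_symm_apply x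
    rw [← hp] at h
    exact h.symm
  have hmain := main_calc (F := F) m i j hmo hio hjo w (φ p.1) (φ p.2) hw
    (hKfix p.1) (hKfix p.2)
  rw [hx, hmain]
  show _ = e ((LinearEquiv.prodComm K K K) (p.1 ^ _, p.2 ^ _))
  rw [LinearEquiv.prodComm_apply]
  show _ = w * φ (p.2 ^ (2^i + 2^j + 1)) + w ^ 2 * φ (p.1 ^ (2^i + 2^j + 1))
  rw [map_pow, map_pow]
  ring
end

section
/- Suppose m is even. Then f_A is linear equivalent over F_q to the monomial map x ↦ x^{Q1+Q2+1+r_A(q−1)} on F_{q^2}; that is, there exist F_q-linear bijections L1, L2 : F_{q^2} → F_{q^2} such that for all x in F_{q^2}, f_A(x) = L1((L2(x))^{Q1+Q2+1+r_A(q−1)}). -/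
/-- The integer `r_A` from Theorem A (ii). -/
def rA (i j : ℕ) : ℕ :=
  if Odd i ∧ Odd j then 0
  else if Even i ∧ Even j then 1
  else if Even i then  -- i even, j odd
    (if 2 ^ i ≤ 2 ^ j then 2 ^ i else 2 ^ j + 1)
  else  -- i odd, j even
    (if 2 ^ i < 2 ^ j then 2 ^ i + 1 else 2 ^ j)

private lemma two_pow_two_mul_mod3 (r : ℕ) : 2 ^ (2 * r) % 3 = 1 := by
  induction r with
  | zero => rfl
  | succ n ih => rw [Nat.mul_succ, pow_add, Nat.mul_mod, ih]; decide

private lemma pow2_mod3_even {k : ℕ} (h : Even k) : 2 ^ k % 3 = 1 := by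
  obtain ⟨r, rfl⟩ := h
  rw [← two_mul]
  exact two_pow_two_mul_mod3 r

private lemma pow2_mod3_odd {k : ℕ} (h : Odd k) : 2 ^ k % 3 = 2 := by
  obtain ⟨r, rfl⟩ := h
  rw [pow_succ, Nat.mul_mod, two_pow_two_mul_mod3 r]

/-- The `K`-linear map `x ↦ a*x + b*x^q` on `F`. -/
private def ablin (K F : Type*) [Field K] [Field F] [Algebra K F] (q : ℕ)
    (hadd : ∀ u v : F, (u + v) ^ q = u ^ q + v ^ q)
    (hsmul : ∀ (c : K) (x : F), (c • x) ^ q = c • x ^ q)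
    (a b : F) : F →ₗ[K] F where
  toFun x := a * x + b * x ^ q
  map_add' u v := by
    show a * (u + v) + b * (u + v) ^ q = a * u + b * u ^ q + (a * v + b * v ^ q)
    rw [hadd]; ring
  map_smul' c x := by
    show a * (c • x) + b * (c • x) ^ q = (RingHom.id K) c • (a * x + b * x ^ q)
    simp only [RingHom.id_apply]
    rw [hsmul c x, mul_smul_comm, mul_smul_comm, ← smul_add]

private lemma ablin_apply (K F : Type*) [Field K] [Field F] [Algebra K F] (q : ℕ)
    (hadd : ∀ u v : F, (u + v) ^ q = u ^ q + v ^ q)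
    (hsmul : ∀ (c : K) (x : F), (c • x) ^ q = c • x ^ q)
    (a b : F) (x : F) : ablin K F q hadd hsmul a b x = a * x + b * x ^ q := rfl

private lemma ablin_bij (K F : Type*) [Field K] [Field F] [Algebra K F] [Finite F] (q : ℕ)
    (hadd : ∀ u v : F, (u + v) ^ q = u ^ q + v ^ q)
    (hsmul : ∀ (c : K) (x : F), (c • x) ^ q = c • x ^ q)
    (hqq : ∀ u : F, (u ^ q) ^ q = u)
    (h2 : (2 : F) = 0)
    (a b : F) (haq : a ^ q = a) (hbq : b ^ q = b) (hab : a ≠ b) :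
    Function.Bijective (ablin K F q hadd hsmul a b) := by
  have hinj : Function.Injective (ablin K F q hadd hsmul a b) := by
    rw [injective_iff_map_eq_zero]
    intro x hx
    rw [ablin_apply] at hx
    by_contra hx0
    have e1 : a * x = b * x ^ q := by linear_combination hx - (b * x ^ q) * h2
    have e2 : a * x ^ q = b * x := by
      have e := congrArg (· ^ q) e1
      simp only [mul_pow] at e
      rw [haq, hbq, hqq] at e
      exact e
    have e3 : (a + b) ^ 2 * x = 0 := by
      linear_combination a * e1 - b * e2 + (a * b * x + a * b * x ^ q) * h2
    rcases mul_eq_zero.mp e3 with h | h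
    · have hab0 : a + b = 0 := (pow_eq_zero_iff (two_ne_zero)).mp h
      exact hab (by linear_combination hab0 - b * h2)
    · exact hx0 h
  exact ⟨hinj, (Finite.injective_iff_bijective.mp hinj).2⟩

/-- Theorem A, case (ii), linear equivalence part: for `m` even, `f_A` is
linear equivalent over `F_q` to `x ↦ x^{Q1+Q2+1+r_A(q-1)}` on `F_{q^2}`. -/
theorem fA_linear_equiv_of_even
    (m i j : ℕ) (hm : 0 < m) (hi : 0 < i) (hj : 0 < j)
    (q Q1 Q2 : ℕ) (hq : q = 2 ^ m) (hQ1 : Q1 = 2 ^ i) (hQ2 : Q2 = 2 ^ j)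
    (K F : Type*) [Field K] [Fintype K] [Field F] [Fintype F] [Algebra K F]
    (hK : Fintype.card K = q) (hF : Fintype.card F = q ^ 2)
    (hme : Even m) :
    ∃ (L1 L2 : F ≃ₗ[K] F),
      ∀ x : F,
        x ^ (q * (Q1 + Q2) + 1) + x ^ (q * (Q1 + 1) + Q2) + x ^ (q * (Q2 + 1) + Q1) +
          x ^ (Q1 + Q2 + q) + x ^ (Q1 + Q2 + 1) =
        L1 ((L2 x) ^ (Q1 + Q2 + 1 + rA i j * (q - 1))) := by
  subst hQ1 hQ2
  classical
  -- characteristic 2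
  have h2 : (2 : F) = 0 := by
    have hcard0 : ((Fintype.card F : ℕ) : F) = 0 := FiniteField.cast_card_eq_zero F
    rw [hF, hq] at hcard0
    have h' : (2 : F) ^ (m * 2) = 0 := by
      rw [pow_mul]; exact_mod_cast hcard0
    exact (pow_eq_zero_iff (by omega : m * 2 ≠ 0)).mp h'
  haveI : CharP F 2 :=
    (CharP.ringChar_of_prime_eq_zero Nat.prime_two h2) ▸ ringChar.charP F
  have hfrob : ∀ (k : ℕ) (u v : F), (u + v) ^ 2 ^ k = u ^ 2 ^ k + v ^ 2 ^ k :=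
    fun k u v => add_pow_char_pow u v 2 k
  -- the cube root of unity
  haveI : Fact (Nat.Prime 3) := ⟨by norm_num⟩
  have h3 : 3 ∣ Fintype.card Fˣ := by
    rw [Fintype.card_units, hF, hq]
    have h41 : (2 ^ m) ^ 2 % 3 = 1 := by
      rw [← pow_mul]; exact pow2_mod3_even ⟨m, by ring⟩
    have h42 : 0 < (2 ^ m) ^ 2 := by positivity
    omega
  obtain ⟨ζ, hζ⟩ := exists_prime_orderOf_dvd_card 3 h3
  set W : F := ((ζ : Fˣ) : F) with hWdef
  have hW3 : W ^ 3 = 1 := by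
    have h := pow_orderOf_eq_one ζ
    rw [hζ] at h
    rw [hWdef, ← Units.val_pow_eq_pow_val, h, Units.val_one]
  have hWne1 : W ≠ 1 := by
    intro h
    have hz : ζ = 1 := Units.val_eq_one.mp h
    rw [hz, orderOf_one] at hζ
    norm_num at hζ
  have hW : W ^ 2 + W + 1 = 0 := by
    rcases mul_eq_zero.mp (show (W - 1) * (W ^ 2 + W + 1) = 0 by linear_combination hW3)
      with h | h
    · exact absurd (by linear_combination h) hWne1
    · exact h
  have hWn : ∀ n : ℕ, W ^ n = W ^ (n % 3) := fun n => by
    conv_lhs => rw [← Nat.div_add_mod n 3]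
    rw [pow_add, pow_mul, hW3, one_pow, one_mul]
  -- basic arithmetic facts
  have hq1 : 1 ≤ q := by rw [hq]; exact Nat.one_le_two_pow
  obtain ⟨t, ht⟩ : ∃ t, q = t + 1 := ⟨q - 1, (Nat.sub_add_cancel hq1).symm⟩
  subst ht
  have hq3 : (t + 1) % 3 = 1 := by rw [hq]; exact pow2_mod3_even hme
  have hWq : W ^ (t+1) = W := by rw [hWn (t+1), hq3, pow_one]
  have hW2q : (W ^ 2) ^ (t+1) = W ^ 2 := by
    rw [← pow_mul, mul_comm 2 (t+1), pow_mul, hWq]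
  have h1W : (1 : F) ≠ W := fun h =>
    one_ne_zero (α := F) (by linear_combination hW + W * h - W * h2)
  have hWW2 : W ≠ W ^ 2 := fun h =>
    one_ne_zero (α := F) (by linear_combination hW + h - W * h2)
  have h1W2 : (1 : F) ≠ W ^ 2 := fun h =>
    one_ne_zero (α := F) (by linear_combination W * hW + (W + 1) * h - W * h2)
  -- field-power facts
  have haddq : ∀ u v : F, (u + v) ^ (t+1) = u ^ (t+1) + v ^ (t+1) := by
    rw [hq]; exact hfrob m
  have hqq : ∀ u : F, (u ^ (t+1)) ^ (t+1) = u := fun u => by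
    rw [← pow_mul, show (t+1) * (t+1) = Fintype.card F by rw [hF]; ring]
    exact FiniteField.pow_card u
  have hsmul : ∀ (c : K) (x : F), (c • x) ^ (t+1) = c • x ^ (t+1) := fun c x => by
    rw [Algebra.smul_def, Algebra.smul_def, mul_pow, ← map_pow,
      show c ^ (t+1) = c from by rw [← hK]; exact FiniteField.pow_card c]
  have hbij2 := ablin_bij K F (t+1) haddq hsmul hqq h2 1 W (one_pow _) hWq h1W
  have hWE : ∀ k : ℕ, Even k → W ^ 2 ^ k = W := fun k hk => by
    rw [hWn (2 ^ k), pow2_mod3_even hk, pow_one]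
  have hWO : ∀ k : ℕ, Odd k → W ^ 2 ^ k = W ^ 2 := fun k hk => by
    rw [hWn (2 ^ k), pow2_mod3_odd hk]
  rcases Nat.even_or_odd i with hie | hio <;> rcases Nat.even_or_odd j with hje | hjo
  · -- i even, j even : rA = 1, L1 = W•id + W²•conj
    refine ⟨LinearEquiv.ofBijective _
        (ablin_bij K F (t+1) haddq hsmul hqq h2 W (W ^ 2) hWq hW2q hWW2),
      LinearEquiv.ofBijective _ hbij2, fun x => ?_⟩
    have hrA : rA i j = 1 := by
      unfold rA
      rw [if_neg (fun h => (Nat.not_odd_iff_even.mpr hie) h.1), if_pos ⟨hie, hje⟩]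
    simp only [LinearEquiv.ofBijective_apply, ablin_apply, one_mul, hrA]
    have hswap : ∀ n : ℕ, (x ^ n) ^ (t+1) = (x ^ (t+1)) ^ n := fun n => by
      rw [← pow_mul, mul_comm n (t+1), pow_mul]
    have hback : ∀ n : ℕ, ((x ^ (t+1)) ^ n) ^ (t+1) = x ^ n := fun n => by
      rw [← pow_mul, mul_comm n (t+1), pow_mul, hqq x]
    have huq : (x + W * x ^ (t+1)) ^ (t+1) = x ^ (t+1) + W * x := by
      rw [haddq, mul_pow, hWq, hqq x]
    have hvq : (x ^ (t+1) + W * x) ^ (t+1) = x + W * x ^ (t+1) := by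
      rw [haddq, hqq x, mul_pow, hWq]
    have E : ∀ k : ℕ, (x + W * x ^ (t+1)) ^ 2 ^ k
        = x ^ 2 ^ k + W ^ 2 ^ k * (x ^ (t+1)) ^ 2 ^ k := fun k => by
      rw [hfrob k, mul_pow]
    have Fq : ∀ k : ℕ, (x ^ (t+1) + W * x) ^ 2 ^ k
        = (x ^ (t+1)) ^ 2 ^ k + W ^ 2 ^ k * x ^ 2 ^ k := fun k => by
      rw [hfrob k, mul_pow]
    have C : ∀ (k : ℕ) (c : F), c ^ (t+1) = c →
        (x ^ 2 ^ k + c * (x ^ (t+1)) ^ 2 ^ k) ^ (t+1)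
          = (x ^ (t+1)) ^ 2 ^ k + c * x ^ 2 ^ k := fun k c hc => by
      rw [haddq, mul_pow, hswap (2 ^ k), hback (2 ^ k), hc]
    have D : ∀ (k : ℕ) (c : F), c ^ (t+1) = c →
        ((x ^ (t+1)) ^ 2 ^ k + c * x ^ 2 ^ k) ^ (t+1)
          = x ^ 2 ^ k + c * (x ^ (t+1)) ^ 2 ^ k := fun k c hc => by
      rw [haddq, mul_pow, hswap (2 ^ k), hback (2 ^ k), hc]
    have l1 : x ^ ((t+1) * (2 ^ i + 2 ^ j) + 1)
        = (x ^ (t+1)) ^ 2 ^ i * (x ^ (t+1)) ^ 2 ^ j * x := by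
      rw [pow_add x ((t+1) * (2 ^ i + 2 ^ j)) 1, pow_one, pow_mul x (t+1) (2 ^ i + 2 ^ j),
        pow_add (x ^ (t+1)) (2 ^ i) (2 ^ j)]
    have l2 : x ^ ((t+1) * (2 ^ i + 1) + 2 ^ j)
        = (x ^ (t+1)) ^ 2 ^ i * x ^ (t+1) * x ^ 2 ^ j := by
      rw [pow_add x ((t+1) * (2 ^ i + 1)) (2 ^ j), pow_mul x (t+1) (2 ^ i + 1),
        pow_add (x ^ (t+1)) (2 ^ i) 1, pow_one]
    have l3 : x ^ ((t+1) * (2 ^ j + 1) + 2 ^ i)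
        = (x ^ (t+1)) ^ 2 ^ j * x ^ (t+1) * x ^ 2 ^ i := by
      rw [pow_add x ((t+1) * (2 ^ j + 1)) (2 ^ i), pow_mul x (t+1) (2 ^ j + 1),
        pow_add (x ^ (t+1)) (2 ^ j) 1, pow_one]
    have l4 : x ^ (2 ^ i + 2 ^ j + (t+1)) = x ^ 2 ^ i * x ^ 2 ^ j * x ^ (t+1) := by
      rw [pow_add x (2 ^ i + 2 ^ j) (t+1), pow_add x (2 ^ i) (2 ^ j)]
    have l5 : x ^ (2 ^ i + 2 ^ j + 1) = x ^ 2 ^ i * x ^ 2 ^ j * x := by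
      rw [pow_add x (2 ^ i + 2 ^ j) 1, pow_add x (2 ^ i) (2 ^ j), pow_one]
    have hd : (x + W * x ^ (t+1)) ^ (2 ^ i + 2 ^ j + 1 + (t + 1 - 1))
        = ((x + W * x ^ (t+1)) ^ 2 ^ i * (x + W * x ^ (t+1)) ^ 2 ^ j)
          * (x + W * x ^ (t+1)) ^ (t+1) := by
      rw [show 2 ^ i + 2 ^ j + 1 + (t + 1 - 1) = 2 ^ i + 2 ^ j + (t+1) from by
        simp only [Nat.add_sub_cancel]; ring]
      rw [pow_add (x + W * x ^ (t+1)) (2 ^ i + 2 ^ j) (t+1),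
        pow_add (x + W * x ^ (t+1)) (2 ^ i) (2 ^ j)]
    rw [hd, E i, E j, hWE i hie, hWE j hje, huq, mul_pow, mul_pow,
      C i W hWq, C j W hWq, hvq]
    rw [l1, l2, l3, l4, l5]; generalize (x ^ (t+1)) ^ 2 ^ i = Y1; generalize x ^ 2 ^ i = X1; generalize (x ^ (t+1)) ^ 2 ^ j = Y2; generalize x ^ 2 ^ j = X2; generalize x ^ (t+1) = Y; linear_combination (-W ^ 3 * Y * X1 * X2 - W ^ 2 * x * X1 * X2 - W ^ 2 * x * Y1 * Y2 + W ^ 2 * Y * X1 * X2 - W ^ 2 * Y * X1 * Y2 - W ^ 2 * Y * Y1 * X2 + W * x * X1 * X2 - 2 * W * x * X1 * Y2 - 2 * W * x * Y1 * X2 + W * x * Y1 * Y2 + W * Y * X1 * Y2 + W * Y * Y1 * X2 - 2 * W * Y * Y1 * Y2 - x * X1 * X2 + 2 * x * X1 * Y2 + 2 * x * Y1 * X2 - x * Y1 * Y2 - Y * X1 * X2 - Y * X1 * Y2 - Y * Y1 * X2 + 2 * Y * Y1 * Y2) * hW + (x * X1 * X2 - x * X1 * Y2 - x * Y1 * X2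 + x * Y1 * Y2 + Y * X1 * X2 + Y * X1 * Y2 + Y * Y1 * X2 - Y * Y1 * Y2) * h2
  · -- i even, j odd
    rcases le_or_gt (2 ^ i) (2 ^ j) with hle | hgt
    · -- rA = 2^i ; L1 = id + W²•conj
      refine ⟨LinearEquiv.ofBijective _
          (ablin_bij K F (t+1) haddq hsmul hqq h2 1 (W ^ 2) (one_pow _) hW2q h1W2),
        LinearEquiv.ofBijective _ hbij2, fun x => ?_⟩
      have hrA : rA i j = 2 ^ i := by
        unfold rA
        rw [if_neg (fun h => (Nat.not_odd_iff_even.mpr hie) h.1),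
          if_neg (fun h => (Nat.not_even_iff_odd.mpr hjo) h.2), if_pos hie, if_pos hle]
      simp only [LinearEquiv.ofBijective_apply, ablin_apply, one_mul, hrA]
      have hswap : ∀ n : ℕ, (x ^ n) ^ (t+1) = (x ^ (t+1)) ^ n := fun n => by
        rw [← pow_mul, mul_comm n (t+1), pow_mul]
      have hback : ∀ n : ℕ, ((x ^ (t+1)) ^ n) ^ (t+1) = x ^ n := fun n => by
        rw [← pow_mul, mul_comm n (t+1), pow_mul, hqq x]
      have huq : (x + W * x ^ (t+1)) ^ (t+1) = x ^ (t+1) + W * x := by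
        rw [haddq, mul_pow, hWq, hqq x]
      have hvq : (x ^ (t+1) + W * x) ^ (t+1) = x + W * x ^ (t+1) := by
        rw [haddq, hqq x, mul_pow, hWq]
      have E : ∀ k : ℕ, (x + W * x ^ (t+1)) ^ 2 ^ k
          = x ^ 2 ^ k + W ^ 2 ^ k * (x ^ (t+1)) ^ 2 ^ k := fun k => by
        rw [hfrob k, mul_pow]
      have Fq : ∀ k : ℕ, (x ^ (t+1) + W * x) ^ 2 ^ k
          = (x ^ (t+1)) ^ 2 ^ k + W ^ 2 ^ k * x ^ 2 ^ k := fun k => by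
        rw [hfrob k, mul_pow]
      have C : ∀ (k : ℕ) (c : F), c ^ (t+1) = c →
          (x ^ 2 ^ k + c * (x ^ (t+1)) ^ 2 ^ k) ^ (t+1)
            = (x ^ (t+1)) ^ 2 ^ k + c * x ^ 2 ^ k := fun k c hc => by
        rw [haddq, mul_pow, hswap (2 ^ k), hback (2 ^ k), hc]
      have D : ∀ (k : ℕ) (c : F), c ^ (t+1) = c →
          ((x ^ (t+1)) ^ 2 ^ k + c * x ^ 2 ^ k) ^ (t+1)
            = x ^ 2 ^ k + c * (x ^ (t+1)) ^ 2 ^ k := fun k c hc => by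
        rw [haddq, mul_pow, hswap (2 ^ k), hback (2 ^ k), hc]
      have l1 : x ^ ((t+1) * (2 ^ i + 2 ^ j) + 1)
          = (x ^ (t+1)) ^ 2 ^ i * (x ^ (t+1)) ^ 2 ^ j * x := by
        rw [pow_add x ((t+1) * (2 ^ i + 2 ^ j)) 1, pow_one, pow_mul x (t+1) (2 ^ i + 2 ^ j),
          pow_add (x ^ (t+1)) (2 ^ i) (2 ^ j)]
      have l2 : x ^ ((t+1) * (2 ^ i + 1) + 2 ^ j)
          = (x ^ (t+1)) ^ 2 ^ i * x ^ (t+1) * x ^ 2 ^ j := by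
        rw [pow_add x ((t+1) * (2 ^ i + 1)) (2 ^ j), pow_mul x (t+1) (2 ^ i + 1),
          pow_add (x ^ (t+1)) (2 ^ i) 1, pow_one]
      have l3 : x ^ ((t+1) * (2 ^ j + 1) + 2 ^ i)
          = (x ^ (t+1)) ^ 2 ^ j * x ^ (t+1) * x ^ 2 ^ i := by
        rw [pow_add x ((t+1) * (2 ^ j + 1)) (2 ^ i), pow_mul x (t+1) (2 ^ j + 1),
          pow_add (x ^ (t+1)) (2 ^ j) 1, pow_one]
      have l4 : x ^ (2 ^ i + 2 ^ j + (t+1)) = x ^ 2 ^ i * x ^ 2 ^ j * x ^ (t+1) := by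
        rw [pow_add x (2 ^ i + 2 ^ j) (t+1), pow_add x (2 ^ i) (2 ^ j)]
      have l5 : x ^ (2 ^ i + 2 ^ j + 1) = x ^ 2 ^ i * x ^ 2 ^ j * x := by
        rw [pow_add x (2 ^ i + 2 ^ j) 1, pow_add x (2 ^ i) (2 ^ j), pow_one]
      have hd : (x + W * x ^ (t+1)) ^ (2 ^ i + 2 ^ j + 1 + 2 ^ i * (t + 1 - 1))
          = ((x + W * x ^ (t+1)) * (x + W * x ^ (t+1)) ^ 2 ^ j)
            * ((x + W * x ^ (t+1)) ^ (t+1)) ^ 2 ^ i := by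
        rw [show 2 ^ i + 2 ^ j + 1 + 2 ^ i * (t + 1 - 1) = 1 + 2 ^ j + (t+1) * 2 ^ i from by
          simp only [Nat.add_sub_cancel]; ring]
        rw [pow_add (x + W * x ^ (t+1)) (1 + 2 ^ j) ((t+1) * 2 ^ i),
          pow_add (x + W * x ^ (t+1)) 1 (2 ^ j),
          pow_mul (x + W * x ^ (t+1)) (t+1) (2 ^ i), pow_one]
      rw [hd, huq, E j, hWO j hjo, Fq i, hWE i hie, mul_pow, mul_pow, huq,
        C j (W ^ 2) hW2q, D i W hWq]
      rw [l1, l2, l3, l4, l5]; generalize (x ^ (t+1)) ^ 2 ^ i = Y1; generalize x ^ 2 ^ i = X1; generalize (x ^ (t+1)) ^ 2 ^ j = Y2; generalize x ^ 2 ^ j = X2; generalize x ^ (t+1) = Y; linear_combination (-W ^ 4 * x * Y1 * X2 - W ^ 3 * x * X1 * X2 + W ^ 3 * x * Y1 * X2 - W ^ 3 * Y * Y1 * X2 + W ^ 2 * x * X1 * X2 - W ^ 2 * x * Y1 * Y2 - W ^ 2 * Y * X1 * X2 - W ^ 2 * Y * X1 * Y2 + W ^ 2 * Y * Y1 * X2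 - 2 * W * x * X1 * Y2 - W * x * Y1 * X2 + W * x * Y1 * Y2 + W * Y * X1 * X2 + W * Y * X1 * Y2 - 2 * W * Y * Y1 * Y2 - x * X1 * X2 + 2 * x * X1 * Y2 + x * Y1 * X2 - x * Y1 * Y2 - Y * X1 * X2 - Y * X1 * Y2 - Y * Y1 * X2 + 2 * Y * Y1 * Y2) * hW + (x * X1 * X2 - x * X1 * Y2 - x * Y1 * X2 + x * Y1 * Y2 + Y * X1 * X2 + Y * X1 * Y2 + Y * Y1 * X2 - Y * Y1 * Y2) * h2
    · -- rA = 2^j + 1 ; L1 = W²•id + conj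
      refine ⟨LinearEquiv.ofBijective _
          (ablin_bij K F (t+1) haddq hsmul hqq h2 (W ^ 2) 1 hW2q (one_pow _) h1W2.symm),
        LinearEquiv.ofBijective _ hbij2, fun x => ?_⟩
      have hrA : rA i j = 2 ^ j + 1 := by
        unfold rA
        rw [if_neg (fun h => (Nat.not_odd_iff_even.mpr hie) h.1),
          if_neg (fun h => (Nat.not_even_iff_odd.mpr hjo) h.2), if_pos hie,
          if_neg (not_le.mpr hgt)]
      simp only [LinearEquiv.ofBijective_apply, ablin_apply, one_mul, hrA]
      have hswap : ∀ n : ℕ, (x ^ n) ^ (t+1) = (x ^ (t+1)) ^ n := fun n => by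
        rw [← pow_mul, mul_comm n (t+1), pow_mul]
      have hback : ∀ n : ℕ, ((x ^ (t+1)) ^ n) ^ (t+1) = x ^ n := fun n => by
        rw [← pow_mul, mul_comm n (t+1), pow_mul, hqq x]
      have huq : (x + W * x ^ (t+1)) ^ (t+1) = x ^ (t+1) + W * x := by
        rw [haddq, mul_pow, hWq, hqq x]
      have hvq : (x ^ (t+1) + W * x) ^ (t+1) = x + W * x ^ (t+1) := by
        rw [haddq, hqq x, mul_pow, hWq]
      have E : ∀ k : ℕ, (x + W * x ^ (t+1)) ^ 2 ^ k
          = x ^ 2 ^ k + W ^ 2 ^ k * (x ^ (t+1)) ^ 2 ^ k := fun k => by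
        rw [hfrob k, mul_pow]
      have Fq : ∀ k : ℕ, (x ^ (t+1) + W * x) ^ 2 ^ k
          = (x ^ (t+1)) ^ 2 ^ k + W ^ 2 ^ k * x ^ 2 ^ k := fun k => by
        rw [hfrob k, mul_pow]
      have C : ∀ (k : ℕ) (c : F), c ^ (t+1) = c →
          (x ^ 2 ^ k + c * (x ^ (t+1)) ^ 2 ^ k) ^ (t+1)
            = (x ^ (t+1)) ^ 2 ^ k + c * x ^ 2 ^ k := fun k c hc => by
        rw [haddq, mul_pow, hswap (2 ^ k), hback (2 ^ k), hc]
      have D : ∀ (k : ℕ) (c : F), c ^ (t+1) = c →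
          ((x ^ (t+1)) ^ 2 ^ k + c * x ^ 2 ^ k) ^ (t+1)
            = x ^ 2 ^ k + c * (x ^ (t+1)) ^ 2 ^ k := fun k c hc => by
        rw [haddq, mul_pow, hswap (2 ^ k), hback (2 ^ k), hc]
      have l1 : x ^ ((t+1) * (2 ^ i + 2 ^ j) + 1)
          = (x ^ (t+1)) ^ 2 ^ i * (x ^ (t+1)) ^ 2 ^ j * x := by
        rw [pow_add x ((t+1) * (2 ^ i + 2 ^ j)) 1, pow_one, pow_mul x (t+1) (2 ^ i + 2 ^ j),
          pow_add (x ^ (t+1)) (2 ^ i) (2 ^ j)]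
      have l2 : x ^ ((t+1) * (2 ^ i + 1) + 2 ^ j)
          = (x ^ (t+1)) ^ 2 ^ i * x ^ (t+1) * x ^ 2 ^ j := by
        rw [pow_add x ((t+1) * (2 ^ i + 1)) (2 ^ j), pow_mul x (t+1) (2 ^ i + 1),
          pow_add (x ^ (t+1)) (2 ^ i) 1, pow_one]
      have l3 : x ^ ((t+1) * (2 ^ j + 1) + 2 ^ i)
          = (x ^ (t+1)) ^ 2 ^ j * x ^ (t+1) * x ^ 2 ^ i := by
        rw [pow_add x ((t+1) * (2 ^ j + 1)) (2 ^ i), pow_mul x (t+1) (2 ^ j + 1),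
          pow_add (x ^ (t+1)) (2 ^ j) 1, pow_one]
      have l4 : x ^ (2 ^ i + 2 ^ j + (t+1)) = x ^ 2 ^ i * x ^ 2 ^ j * x ^ (t+1) := by
        rw [pow_add x (2 ^ i + 2 ^ j) (t+1), pow_add x (2 ^ i) (2 ^ j)]
      have l5 : x ^ (2 ^ i + 2 ^ j + 1) = x ^ 2 ^ i * x ^ 2 ^ j * x := by
        rw [pow_add x (2 ^ i + 2 ^ j) 1, pow_add x (2 ^ i) (2 ^ j), pow_one]
      have hd : (x + W * x ^ (t+1)) ^ (2 ^ i + 2 ^ j + 1 + (2 ^ j + 1) * (t + 1 - 1))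
          = ((x + W * x ^ (t+1)) ^ 2 ^ i * ((x + W * x ^ (t+1)) ^ (t+1)) ^ 2 ^ j)
            * (x + W * x ^ (t+1)) ^ (t+1) := by
        rw [show 2 ^ i + 2 ^ j + 1 + (2 ^ j + 1) * (t + 1 - 1)
            = 2 ^ i + (t+1) * 2 ^ j + (t+1) from by
          simp only [Nat.add_sub_cancel]; ring]
        rw [pow_add (x + W * x ^ (t+1)) (2 ^ i + (t+1) * 2 ^ j) (t+1),
          pow_add (x + W * x ^ (t+1)) (2 ^ i) ((t+1) * 2 ^ j),
          pow_mul (x + W * x ^ (t+1)) (t+1) (2 ^ j)]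
      rw [hd, huq, E i, hWE i hie, Fq j, hWO j hjo, mul_pow, mul_pow,
        C i W hWq, D j (W ^ 2) hW2q, hvq]
      rw [l1, l2, l3, l4, l5]; generalize (x ^ (t+1)) ^ 2 ^ i = Y1; generalize x ^ 2 ^ i = X1; generalize (x ^ (t+1)) ^ 2 ^ j = Y2; generalize x ^ 2 ^ j = X2; generalize x ^ (t+1) = Y; linear_combination (-W ^ 4 * x * Y1 * X2 - W ^ 3 * x * X1 * X2 + W ^ 3 * x * Y1 * X2 - W ^ 3 * Y * Y1 * X2 + W ^ 2 * x * X1 * X2 - W ^ 2 * x * Y1 * Y2 - W ^ 2 * Y * X1 * X2 - W ^ 2 * Y * X1 * Y2 + W ^ 2 * Y * Y1 * X2 - 2 * W * x * X1 * Y2 - W * x * Y1 * X2 + W * x * Y1 * Y2 + W * Y * X1 * X2 + W * Y * X1 * Y2 - 2 * W * Y * Y1 * Y2 - x * X1 * X2 + 2 * x * X1 * Y2 + x * Y1 * X2 - x * Y1 * Y2 - Y * X1 * X2 - Y * X1 * Y2 - Y * Y1 * X2 + 2 * Y * Y1 * Y2) * hW + (x * X1 * X2 - x * X1 * Y2 -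 x * Y1 * X2 + x * Y1 * Y2 + Y * X1 * X2 + Y * X1 * Y2 + Y * Y1 * X2 - Y * Y1 * Y2) * h2
  · -- i odd, j even
    rcases lt_or_ge (2 ^ i) (2 ^ j) with hlt | hge
    · -- rA = 2^i + 1 ; L1 = W²•id + conj
      refine ⟨LinearEquiv.ofBijective _
          (ablin_bij K F (t+1) haddq hsmul hqq h2 (W ^ 2) 1 hW2q (one_pow _) h1W2.symm),
        LinearEquiv.ofBijective _ hbij2, fun x => ?_⟩
      have hrA : rA i j = 2 ^ i + 1 := by
        unfold rA
        rw [if_neg (fun h => (Nat.not_odd_iff_even.mpr hje) h.2),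
          if_neg (fun h => (Nat.not_even_iff_odd.mpr hio) h.1),
          if_neg (Nat.not_even_iff_odd.mpr hio), if_pos hlt]
      simp only [LinearEquiv.ofBijective_apply, ablin_apply, one_mul, hrA]
      have hswap : ∀ n : ℕ, (x ^ n) ^ (t+1) = (x ^ (t+1)) ^ n := fun n => by
        rw [← pow_mul, mul_comm n (t+1), pow_mul]
      have hback : ∀ n : ℕ, ((x ^ (t+1)) ^ n) ^ (t+1) = x ^ n := fun n => by
        rw [← pow_mul, mul_comm n (t+1), pow_mul, hqq x]
      have huq : (x + W * x ^ (t+1)) ^ (t+1) = x ^ (t+1) + W * x := by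
        rw [haddq, mul_pow, hWq, hqq x]
      have hvq : (x ^ (t+1) + W * x) ^ (t+1) = x + W * x ^ (t+1) := by
        rw [haddq, hqq x, mul_pow, hWq]
      have E : ∀ k : ℕ, (x + W * x ^ (t+1)) ^ 2 ^ k
          = x ^ 2 ^ k + W ^ 2 ^ k * (x ^ (t+1)) ^ 2 ^ k := fun k => by
        rw [hfrob k, mul_pow]
      have Fq : ∀ k : ℕ, (x ^ (t+1) + W * x) ^ 2 ^ k
          = (x ^ (t+1)) ^ 2 ^ k + W ^ 2 ^ k * x ^ 2 ^ k := fun k => by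
        rw [hfrob k, mul_pow]
      have C : ∀ (k : ℕ) (c : F), c ^ (t+1) = c →
          (x ^ 2 ^ k + c * (x ^ (t+1)) ^ 2 ^ k) ^ (t+1)
            = (x ^ (t+1)) ^ 2 ^ k + c * x ^ 2 ^ k := fun k c hc => by
        rw [haddq, mul_pow, hswap (2 ^ k), hback (2 ^ k), hc]
      have D : ∀ (k : ℕ) (c : F), c ^ (t+1) = c →
          ((x ^ (t+1)) ^ 2 ^ k + c * x ^ 2 ^ k) ^ (t+1)
            = x ^ 2 ^ k + c * (x ^ (t+1)) ^ 2 ^ k := fun k c hc => by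
        rw [haddq, mul_pow, hswap (2 ^ k), hback (2 ^ k), hc]
      have l1 : x ^ ((t+1) * (2 ^ i + 2 ^ j) + 1)
          = (x ^ (t+1)) ^ 2 ^ i * (x ^ (t+1)) ^ 2 ^ j * x := by
        rw [pow_add x ((t+1) * (2 ^ i + 2 ^ j)) 1, pow_one, pow_mul x (t+1) (2 ^ i + 2 ^ j),
          pow_add (x ^ (t+1)) (2 ^ i) (2 ^ j)]
      have l2 : x ^ ((t+1) * (2 ^ i + 1) + 2 ^ j)
          = (x ^ (t+1)) ^ 2 ^ i * x ^ (t+1) * x ^ 2 ^ j := by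
        rw [pow_add x ((t+1) * (2 ^ i + 1)) (2 ^ j), pow_mul x (t+1) (2 ^ i + 1),
          pow_add (x ^ (t+1)) (2 ^ i) 1, pow_one]
      have l3 : x ^ ((t+1) * (2 ^ j + 1) + 2 ^ i)
          = (x ^ (t+1)) ^ 2 ^ j * x ^ (t+1) * x ^ 2 ^ i := by
        rw [pow_add x ((t+1) * (2 ^ j + 1)) (2 ^ i), pow_mul x (t+1) (2 ^ j + 1),
          pow_add (x ^ (t+1)) (2 ^ j) 1, pow_one]
      have l4 : x ^ (2 ^ i + 2 ^ j + (t+1)) = x ^ 2 ^ i * x ^ 2 ^ j * x ^ (t+1) := by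
        rw [pow_add x (2 ^ i + 2 ^ j) (t+1), pow_add x (2 ^ i) (2 ^ j)]
      have l5 : x ^ (2 ^ i + 2 ^ j + 1) = x ^ 2 ^ i * x ^ 2 ^ j * x := by
        rw [pow_add x (2 ^ i + 2 ^ j) 1, pow_add x (2 ^ i) (2 ^ j), pow_one]
      have hd : (x + W * x ^ (t+1)) ^ (2 ^ i + 2 ^ j + 1 + (2 ^ i + 1) * (t + 1 - 1))
          = ((x + W * x ^ (t+1)) ^ 2 ^ j * ((x + W * x ^ (t+1)) ^ (t+1)) ^ 2 ^ i)
            * (x + W * x ^ (t+1)) ^ (t+1) := by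
        rw [show 2 ^ i + 2 ^ j + 1 + (2 ^ i + 1) * (t + 1 - 1)
            = 2 ^ j + (t+1) * 2 ^ i + (t+1) from by
          simp only [Nat.add_sub_cancel]; ring]
        rw [pow_add (x + W * x ^ (t+1)) (2 ^ j + (t+1) * 2 ^ i) (t+1),
          pow_add (x + W * x ^ (t+1)) (2 ^ j) ((t+1) * 2 ^ i),
          pow_mul (x + W * x ^ (t+1)) (t+1) (2 ^ i)]
      rw [hd, huq, E j, hWE j hje, Fq i, hWO i hio, mul_pow, mul_pow,
        C j W hWq, D i (W ^ 2) hW2q, hvq]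
      rw [l1, l2, l3, l4, l5]; generalize (x ^ (t+1)) ^ 2 ^ i = Y1; generalize x ^ 2 ^ i = X1; generalize (x ^ (t+1)) ^ 2 ^ j = Y2; generalize x ^ 2 ^ j = X2; generalize x ^ (t+1) = Y; linear_combination (-W ^ 4 * x * X1 * Y2 - W ^ 3 * x * X1 * X2 + W ^ 3 * x * X1 * Y2 - W ^ 3 * Y * X1 * Y2 + W ^ 2 * x * X1 * X2 - W ^ 2 * x * Y1 * Y2 - W ^ 2 * Y * X1 * X2 + W ^ 2 * Y * X1 * Y2 - W ^ 2 * Y * Y1 * X2 - W * x * X1 * Y2 - 2 * W * x * Y1 * X2 + W * x * Y1 * Y2 + W * Y * X1 * X2 + W * Y * Y1 * X2 - 2 * W * Y * Y1 * Y2 - x * X1 * X2 + x * X1 * Y2 + 2 * x * Y1 * X2 - x * Y1 * Y2 - Y * X1 * X2 - Y * X1 * Y2 - Y * Y1 * X2 + 2 * Y * Y1 * Y2) * hW + (x * X1 * X2 - x * X1 * Y2 - x * Y1 * X2 + x * Y1 * Y2 + Y * X1 * X2 + Y * X1 * Y2 + Y * Y1 * X2 - Y * Y1 * Y2) * h2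
    · -- rA = 2^j ; L1 = id + W²•conj
      refine ⟨LinearEquiv.ofBijective _
          (ablin_bij K F (t+1) haddq hsmul hqq h2 1 (W ^ 2) (one_pow _) hW2q h1W2),
        LinearEquiv.ofBijective _ hbij2, fun x => ?_⟩
      have hrA : rA i j = 2 ^ j := by
        unfold rA
        rw [if_neg (fun h => (Nat.not_odd_iff_even.mpr hje) h.2),
          if_neg (fun h => (Nat.not_even_iff_odd.mpr hio) h.1),
          if_neg (Nat.not_even_iff_odd.mpr hio), if_neg (not_lt.mpr hge)]
      simp only [LinearEquiv.ofBijective_apply, ablin_apply, one_mul, hrA]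
      have hswap : ∀ n : ℕ, (x ^ n) ^ (t+1) = (x ^ (t+1)) ^ n := fun n => by
        rw [← pow_mul, mul_comm n (t+1), pow_mul]
      have hback : ∀ n : ℕ, ((x ^ (t+1)) ^ n) ^ (t+1) = x ^ n := fun n => by
        rw [← pow_mul, mul_comm n (t+1), pow_mul, hqq x]
      have huq : (x + W * x ^ (t+1)) ^ (t+1) = x ^ (t+1) + W * x := by
        rw [haddq, mul_pow, hWq, hqq x]
      have hvq : (x ^ (t+1) + W * x) ^ (t+1) = x + W * x ^ (t+1) := by
        rw [haddq, hqq x, mul_pow, hWq]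
      have E : ∀ k : ℕ, (x + W * x ^ (t+1)) ^ 2 ^ k
          = x ^ 2 ^ k + W ^ 2 ^ k * (x ^ (t+1)) ^ 2 ^ k := fun k => by
        rw [hfrob k, mul_pow]
      have Fq : ∀ k : ℕ, (x ^ (t+1) + W * x) ^ 2 ^ k
          = (x ^ (t+1)) ^ 2 ^ k + W ^ 2 ^ k * x ^ 2 ^ k := fun k => by
        rw [hfrob k, mul_pow]
      have C : ∀ (k : ℕ) (c : F), c ^ (t+1) = c →
          (x ^ 2 ^ k + c * (x ^ (t+1)) ^ 2 ^ k) ^ (t+1)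
            = (x ^ (t+1)) ^ 2 ^ k + c * x ^ 2 ^ k := fun k c hc => by
        rw [haddq, mul_pow, hswap (2 ^ k), hback (2 ^ k), hc]
      have D : ∀ (k : ℕ) (c : F), c ^ (t+1) = c →
          ((x ^ (t+1)) ^ 2 ^ k + c * x ^ 2 ^ k) ^ (t+1)
            = x ^ 2 ^ k + c * (x ^ (t+1)) ^ 2 ^ k := fun k c hc => by
        rw [haddq, mul_pow, hswap (2 ^ k), hback (2 ^ k), hc]
      have l1 : x ^ ((t+1) * (2 ^ i + 2 ^ j) + 1)
          = (x ^ (t+1)) ^ 2 ^ i * (x ^ (t+1)) ^ 2 ^ j * x := by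
        rw [pow_add x ((t+1) * (2 ^ i + 2 ^ j)) 1, pow_one, pow_mul x (t+1) (2 ^ i + 2 ^ j),
          pow_add (x ^ (t+1)) (2 ^ i) (2 ^ j)]
      have l2 : x ^ ((t+1) * (2 ^ i + 1) + 2 ^ j)
          = (x ^ (t+1)) ^ 2 ^ i * x ^ (t+1) * x ^ 2 ^ j := by
        rw [pow_add x ((t+1) * (2 ^ i + 1)) (2 ^ j), pow_mul x (t+1) (2 ^ i + 1),
          pow_add (x ^ (t+1)) (2 ^ i) 1, pow_one]
      have l3 : x ^ ((t+1) * (2 ^ j + 1) + 2 ^ i)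
          = (x ^ (t+1)) ^ 2 ^ j * x ^ (t+1) * x ^ 2 ^ i := by
        rw [pow_add x ((t+1) * (2 ^ j + 1)) (2 ^ i), pow_mul x (t+1) (2 ^ j + 1),
          pow_add (x ^ (t+1)) (2 ^ j) 1, pow_one]
      have l4 : x ^ (2 ^ i + 2 ^ j + (t+1)) = x ^ 2 ^ i * x ^ 2 ^ j * x ^ (t+1) := by
        rw [pow_add x (2 ^ i + 2 ^ j) (t+1), pow_add x (2 ^ i) (2 ^ j)]
      have l5 : x ^ (2 ^ i + 2 ^ j + 1) = x ^ 2 ^ i * x ^ 2 ^ j * x := by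
        rw [pow_add x (2 ^ i + 2 ^ j) 1, pow_add x (2 ^ i) (2 ^ j), pow_one]
      have hd : (x + W * x ^ (t+1)) ^ (2 ^ i + 2 ^ j + 1 + 2 ^ j * (t + 1 - 1))
          = ((x + W * x ^ (t+1)) * (x + W * x ^ (t+1)) ^ 2 ^ i)
            * ((x + W * x ^ (t+1)) ^ (t+1)) ^ 2 ^ j := by
        rw [show 2 ^ i + 2 ^ j + 1 + 2 ^ j * (t + 1 - 1) = 1 + 2 ^ i + (t+1) * 2 ^ j from by
          simp only [Nat.add_sub_cancel]; ring]
        rw [pow_add (x + W * x ^ (t+1)) (1 + 2 ^ i) ((t+1) * 2 ^ j),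
          pow_add (x + W * x ^ (t+1)) 1 (2 ^ i),
          pow_mul (x + W * x ^ (t+1)) (t+1) (2 ^ j), pow_one]
      rw [hd, huq, E i, hWO i hio, Fq j, hWE j hje, mul_pow, mul_pow, huq,
        C i (W ^ 2) hW2q, D j W hWq]
      rw [l1, l2, l3, l4, l5]; generalize (x ^ (t+1)) ^ 2 ^ i = Y1; generalize x ^ 2 ^ i = X1; generalize (x ^ (t+1)) ^ 2 ^ j = Y2; generalize x ^ 2 ^ j = X2; generalize x ^ (t+1) = Y; linear_combination (-W ^ 4 * x * X1 * Y2 - W ^ 3 * x * X1 * X2 + W ^ 3 * x * X1 * Y2 - W ^ 3 * Y * X1 * Y2 + W ^ 2 * x * X1 * X2 - W ^ 2 * x * Y1 * Y2 - W ^ 2 * Y * X1 * X2 + W ^ 2 * Y * X1 * Y2 - W ^ 2 * Y * Y1 * X2 - W * x * X1 * Y2 - 2 * W * x * Y1 * X2 + W * x * Y1 * Y2 + W * Y * X1 * X2 + W * Y * Y1 * X2 - 2 * W * Y * Y1 * Y2 - x * X1 * X2 + x * X1 * Y2 + 2 * x * Y1 * X2 - x * Y1 * Y2 - Y * X1 *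 X2 - Y * X1 * Y2 - Y * Y1 * X2 + 2 * Y * Y1 * Y2) * hW + (x * X1 * X2 - x * X1 * Y2 - x * Y1 * X2 + x * Y1 * Y2 + Y * X1 * X2 + Y * X1 * Y2 + Y * Y1 * X2 - Y * Y1 * Y2) * h2
  · -- i odd, j odd : rA = 0 ; L1 = W•id + conj
    refine ⟨LinearEquiv.ofBijective _
        (ablin_bij K F (t+1) haddq hsmul hqq h2 W 1 hWq (one_pow _) h1W.symm),
      LinearEquiv.ofBijective _ hbij2, fun x => ?_⟩
    have hrA : rA i j = 0 := by
      unfold rA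
      rw [if_pos ⟨hio, hjo⟩]
    simp only [LinearEquiv.ofBijective_apply, ablin_apply, one_mul, hrA]
    have hswap : ∀ n : ℕ, (x ^ n) ^ (t+1) = (x ^ (t+1)) ^ n := fun n => by
      rw [← pow_mul, mul_comm n (t+1), pow_mul]
    have hback : ∀ n : ℕ, ((x ^ (t+1)) ^ n) ^ (t+1) = x ^ n := fun n => by
      rw [← pow_mul, mul_comm n (t+1), pow_mul, hqq x]
    have huq : (x + W * x ^ (t+1)) ^ (t+1) = x ^ (t+1) + W * x := by
      rw [haddq, mul_pow, hWq, hqq x]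
    have hvq : (x ^ (t+1) + W * x) ^ (t+1) = x + W * x ^ (t+1) := by
      rw [haddq, hqq x, mul_pow, hWq]
    have E : ∀ k : ℕ, (x + W * x ^ (t+1)) ^ 2 ^ k
        = x ^ 2 ^ k + W ^ 2 ^ k * (x ^ (t+1)) ^ 2 ^ k := fun k => by
      rw [hfrob k, mul_pow]
    have Fq : ∀ k : ℕ, (x ^ (t+1) + W * x) ^ 2 ^ k
        = (x ^ (t+1)) ^ 2 ^ k + W ^ 2 ^ k * x ^ 2 ^ k := fun k => by
      rw [hfrob k, mul_pow]
    have C : ∀ (k : ℕ) (c : F), c ^ (t+1) = c →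
        (x ^ 2 ^ k + c * (x ^ (t+1)) ^ 2 ^ k) ^ (t+1)
          = (x ^ (t+1)) ^ 2 ^ k + c * x ^ 2 ^ k := fun k c hc => by
      rw [haddq, mul_pow, hswap (2 ^ k), hback (2 ^ k), hc]
    have D : ∀ (k : ℕ) (c : F), c ^ (t+1) = c →
        ((x ^ (t+1)) ^ 2 ^ k + c * x ^ 2 ^ k) ^ (t+1)
          = x ^ 2 ^ k + c * (x ^ (t+1)) ^ 2 ^ k := fun k c hc => by
      rw [haddq, mul_pow, hswap (2 ^ k), hback (2 ^ k), hc]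
    have l1 : x ^ ((t+1) * (2 ^ i + 2 ^ j) + 1)
        = (x ^ (t+1)) ^ 2 ^ i * (x ^ (t+1)) ^ 2 ^ j * x := by
      rw [pow_add x ((t+1) * (2 ^ i + 2 ^ j)) 1, pow_one, pow_mul x (t+1) (2 ^ i + 2 ^ j),
        pow_add (x ^ (t+1)) (2 ^ i) (2 ^ j)]
    have l2 : x ^ ((t+1) * (2 ^ i + 1) + 2 ^ j)
        = (x ^ (t+1)) ^ 2 ^ i * x ^ (t+1) * x ^ 2 ^ j := by
      rw [pow_add x ((t+1) * (2 ^ i + 1)) (2 ^ j), pow_mul x (t+1) (2 ^ i + 1),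
        pow_add (x ^ (t+1)) (2 ^ i) 1, pow_one]
    have l3 : x ^ ((t+1) * (2 ^ j + 1) + 2 ^ i)
        = (x ^ (t+1)) ^ 2 ^ j * x ^ (t+1) * x ^ 2 ^ i := by
      rw [pow_add x ((t+1) * (2 ^ j + 1)) (2 ^ i), pow_mul x (t+1) (2 ^ j + 1),
        pow_add (x ^ (t+1)) (2 ^ j) 1, pow_one]
    have l4 : x ^ (2 ^ i + 2 ^ j + (t+1)) = x ^ 2 ^ i * x ^ 2 ^ j * x ^ (t+1) := by
      rw [pow_add x (2 ^ i + 2 ^ j) (t+1), pow_add x (2 ^ i) (2 ^ j)]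
    have l5 : x ^ (2 ^ i + 2 ^ j + 1) = x ^ 2 ^ i * x ^ 2 ^ j * x := by
      rw [pow_add x (2 ^ i + 2 ^ j) 1, pow_add x (2 ^ i) (2 ^ j), pow_one]
    have hd : (x + W * x ^ (t+1)) ^ (2 ^ i + 2 ^ j + 1 + 0 * (t + 1 - 1))
        = ((x + W * x ^ (t+1)) ^ 2 ^ i * (x + W * x ^ (t+1)) ^ 2 ^ j)
          * (x + W * x ^ (t+1)) := by
      rw [show 2 ^ i + 2 ^ j + 1 + 0 * (t + 1 - 1) = 2 ^ i + 2 ^ j + 1 from by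
        simp only [Nat.add_sub_cancel]; ring]
      rw [pow_add (x + W * x ^ (t+1)) (2 ^ i + 2 ^ j) 1,
        pow_add (x + W * x ^ (t+1)) (2 ^ i) (2 ^ j), pow_one]
    rw [hd, E i, E j, hWO i hio, hWO j hjo, mul_pow, mul_pow,
      C i (W ^ 2) hW2q, C j (W ^ 2) hW2q, huq]
    rw [l1, l2, l3, l4, l5]; generalize (x ^ (t+1)) ^ 2 ^ i = Y1; generalize x ^ 2 ^ i = X1; generalize (x ^ (t+1)) ^ 2 ^ j = Y2; generalize x ^ 2 ^ j = X2; generalize x ^ (t+1) = Y; linear_combination (-W ^ 4 * Y * Y1 * Y2 - W ^ 3 * x * X1 * X2 - W ^ 3 * x * Y1 * Y2 + W ^ 3 * Y * Y1 * Y2 + W ^ 2 * x * X1 * X2 + W ^ 2 * x * Y1 * Y2 - W ^ 2 * Y * X1 * X2 - W ^ 2 * Y * X1 * Y2 - W ^ 2 * Y * Y1 * X2 - 2 * W * x * X1 * Y2 - 2 * W * x * Y1 * X2 + W * Y * X1 * X2 + W * Y * X1 * Y2 + W * Y * Y1 * X2 - W * Y * Y1 * Y2 - x * X1 * X2 + 2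 * x * X1 * Y2 + 2 * x * Y1 * X2 - x * Y1 * Y2 - Y * X1 * X2 - Y * X1 * Y2 - Y * Y1 * X2 + Y * Y1 * Y2) * hW + (x * X1 * X2 - x * X1 * Y2 - x * Y1 * X2 + x * Y1 * Y2 + Y * X1 * X2 + Y * X1 * Y2 + Y * Y1 * X2 - Y * Y1 * Y2) * h2
end

section
/- Suppose m is odd, i is odd and j is even. Then f_B is linear equivalent over F_q to the map (u,v) ↦ (u^{Q1+Q2+1}, v^{Q1+Q2+1}) on F_q × F_q; that is, there exist F_q-linear bijections L1 : F_q × F_q → F_{q^2} and L2 : F_{q^2} → F_q × F_q such that for all x in F_{q^2}, f_B(x) = L1(u^{Q1+Q2+1}, v^{Q1+Q2+1}) where (u,v) = L2(x). -/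
private lemma four_pow_threemul (s : ℕ) : ∃ u, 4 ^ s = 3 * u + 1 := by
  induction s with
  | zero => exact ⟨0, rfl⟩
  | succ n ih =>
    obtain ⟨u, hu⟩ := ih
    exact ⟨4 * u + 1, by rw [pow_succ, hu]; ring⟩

private lemma two_pow_odd_threemul {n : ℕ} (hn : Odd n) : ∃ t, 2 ^ n = 3 * t + 2 := by
  obtain ⟨s, rfl⟩ := hn
  obtain ⟨u, hu⟩ := four_pow_threemul s
  refine ⟨2 * u, ?_⟩
  have h : 2 ^ (2 * s + 1) = 4 ^ s * 2 := by
    rw [pow_succ, pow_mul]; norm_num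
  rw [h, hu]; ring

private lemma two_pow_even_threemul {n : ℕ} (hn : Even n) : ∃ t, 2 ^ n = 3 * t + 1 := by
  obtain ⟨s, rfl⟩ := hn
  obtain ⟨u, hu⟩ := four_pow_threemul s
  refine ⟨u, ?_⟩
  have h : 2 ^ (s + s) = 4 ^ s := by
    rw [pow_add, ← mul_pow]; norm_num
  rw [h, hu]

/-- Theorem B, case (i), linear equivalence part: for `m` odd, `i` odd and `j` even,
`f_B` is linear equivalent over `F_q` to `(u, v) ↦ (u^{Q1+Q2+1}, v^{Q1+Q2+1})`
on `F_q × F_q`. -/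
theorem fB_linear_equiv_of_odd
    (m i j : ℕ) (hm : 0 < m) (hi : 0 < i) (hj : 0 < j)
    (q Q1 Q2 : ℕ) (hq : q = 2 ^ m) (hQ1 : Q1 = 2 ^ i) (hQ2 : Q2 = 2 ^ j)
    (K F : Type*) [Field K] [Fintype K] [Field F] [Fintype F] [Algebra K F]
    (hK : Fintype.card K = q) (hF : Fintype.card F = q ^ 2)
    (hmo : Odd m) (hio : Odd i) (hje : Even j) :
    ∃ (L1 : (K × K) ≃ₗ[K] F) (L2 : F ≃ₗ[K] (K × K)),
      ∀ x : F,
        x ^ (q * (Q1 + Q2) + 1) + x ^ (q * (Q1 + 1) + Q2) + x ^ (q * Q1 + Q2 + 1) +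
          x ^ (q * (Q2 + 1) + Q1) + x ^ (Q1 + Q2 + 1) =
        L1 ((L2 x).1 ^ (Q1 + Q2 + 1), (L2 x).2 ^ (Q1 + Q2 + 1)) := by
  classical
  -- characteristic 2
  have hq1 : 1 < q := by subst hq; exact Nat.one_lt_two_pow (by omega)
  obtain ⟨p, hpinst⟩ := CharP.exists F
  haveI := hpinst
  obtain ⟨n, hpp, hcard⟩ := FiniteField.card F p
  have hp2 : p = 2 := by
    have h1 : (2 : ℕ) ^ (2 * m) = p ^ (n : ℕ) := by
      rw [← hcard, hF, hq, ← pow_mul]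
      congr 1
      ring
    have hdvd : p ∣ 2 ^ (2 * m) := by
      rw [h1]
      exact dvd_pow_self p n.pos.ne'
    have h3 := hpp.dvd_of_dvd_pow hdvd
    exact (Nat.prime_dvd_prime_iff_eq hpp Nat.prime_two).mp h3
  subst hp2
  haveI : Fact (Nat.Prime 2) := ⟨Nat.prime_two⟩
  have h2 : (2 : F) = 0 := by exact_mod_cast CharP.cast_eq_zero F 2
  -- a primitive cube root of unity
  haveI : Fact (Nat.Prime 3) := ⟨by norm_num⟩
  have h3dvd : 3 ∣ Fintype.card Fˣ := by
    rw [Fintype.card_units, hF, hq, ← pow_mul]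
    obtain ⟨u, hu⟩ := two_pow_even_threemul (n := m * 2) ⟨m, by ring⟩
    rw [hu]; omega
  obtain ⟨ζ, hζ⟩ := exists_prime_orderOf_dvd_card (G := Fˣ) 3 h3dvd
  set w : F := (ζ : F) with hwdef
  have hw3 : w ^ 3 = 1 := by
    have h := pow_orderOf_eq_one ζ
    rw [hζ] at h
    have h2 := congrArg (Units.val) h
    simpa using h2
  have hw1 : w ≠ 1 := by
    intro h
    have : ζ = 1 := Units.ext h
    rw [this, orderOf_one] at hζ; omega
  have hwsq : w ^ 2 = w + 1 := by
    have hfac : (w - 1) * (w ^ 2 + w + 1) = 0 := by linear_combination hw3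
    rcases mul_eq_zero.mp hfac with h | h
    · exact absurd (by linear_combination h) hw1
    · linear_combination h - (w + 1) * h2
  have hw4 : w ^ 4 = w := by linear_combination w * hw3
  -- powers of w
  have hpow2 : ∀ n : ℕ, Odd n → w ^ (2 ^ n) = w ^ 2 := by
    intro n hn
    obtain ⟨t, ht⟩ := two_pow_odd_threemul hn
    rw [ht, pow_add, pow_mul, hw3, one_pow, one_mul]
  have hpow1 : ∀ n : ℕ, Even n → w ^ (2 ^ n) = w := by
    intro n hn
    obtain ⟨t, ht⟩ := two_pow_even_threemul hn
    rw [ht, pow_add, pow_mul, hw3, one_pow, one_mul, pow_one]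
  have hwq : w ^ q = w ^ 2 := by rw [hq]; exact hpow2 m hmo
  have hwQ1 : w ^ Q1 = w ^ 2 := by rw [hQ1]; exact hpow2 i hio
  have hwQ2 : w ^ Q2 = w := by rw [hQ2]; exact hpow1 j hje
  -- Frobenius facts
  have hfrob : ∀ s t : F, (s + t) ^ q = s ^ q + t ^ q := by
    intro s t; rw [hq]; exact add_pow_char_pow s t 2 _
  have hfrobQ1 : ∀ s t : F, (s + t) ^ Q1 = s ^ Q1 + t ^ Q1 := by
    intro s t; rw [hQ1]; exact add_pow_char_pow s t 2 _
  have hfrobQ2 : ∀ s t : F, (s + t) ^ Q2 = s ^ Q2 + t ^ Q2 := by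
    intro s t; rw [hQ2]; exact add_pow_char_pow s t 2 _
  have hKfix : ∀ c : K, (algebraMap K F c) ^ q = algebraMap K F c := by
    intro c
    rw [← map_pow, ← hK, FiniteField.pow_card]
  -- the linear map
  set L : (K × K) →ₗ[K] F :=
    { toFun := fun p => algebraMap K F p.1 * w + algebraMap K F p.2 * w ^ 2
      map_add' := by
        intro p1 p2
        simp only [Prod.fst_add, Prod.snd_add, map_add]
        ring
      map_smul' := by
        intro c p
        simp only [Prod.smul_fst, Prod.smul_snd, smul_eq_mul, map_mul, RingHom.id_apply]
        rw [Algebra.smul_def]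
        ring } with hLdef
  have hLapply : ∀ p : K × K, L p = algebraMap K F p.1 * w + algebraMap K F p.2 * w ^ 2 := by
    intro p; rfl
  -- injectivity
  have hzero : ∀ c d : K, algebraMap K F c * w + algebraMap K F d * w ^ 2 = 0 →
      c = 0 ∧ d = 0 := by
    intro c d hcd
    have heq : algebraMap K F (c + d) * w + algebraMap K F d = 0 := by
      rw [map_add]
      linear_combination hcd - (algebraMap K F d) * hwsq
    have hcd0 : c + d = 0 := by
      by_contra hne
      have hEne : algebraMap K F (c + d) ≠ 0 := fun h =>
        hne ((algebraMap K F).injective (by rw [h, map_zero]))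
      have hwval : w = algebraMap K F (-d) / algebraMap K F (c + d) := by
        rw [eq_div_iff hEne, map_neg]
        linear_combination heq
      have hfix : w ^ q = w := by
        rw [hwval, div_pow, ← map_pow, ← map_pow, ← hK, FiniteField.pow_card,
          FiniteField.pow_card]
      rw [hwq, hwsq] at hfix
      have : (1 : F) = 0 := by linear_combination hfix
      exact one_ne_zero this
    have hd0 : d = 0 := by
      have h6 : algebraMap K F d = 0 := by
        rw [hcd0] at heq; simpa using heq
      exact (algebraMap K F).injective (by rw [h6, map_zero])
    refine ⟨?_, hd0⟩
    rw [hd0, add_zero] at hcd0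
    exact hcd0
  have hinj : Function.Injective L := by
    intro p1 p2 hEq
    have hsub : L (p1 - p2) = 0 := by rw [map_sub, hEq, sub_self]
    rw [hLapply] at hsub
    obtain ⟨h1, h2'⟩ := hzero _ _ hsub
    have e1 : p1.1 = p2.1 := by
      have := sub_eq_zero.mp (show p1.1 - p2.1 = 0 from h1)
      exact this
    have e2 : p1.2 = p2.2 := sub_eq_zero.mp (show p1.2 - p2.2 = 0 from h2')
    exact Prod.ext e1 e2
  -- dimensions
  have hfinrankF : Module.finrank K F = 2 := by
    have hc : Fintype.card F = Fintype.card K ^ Module.finrank K F :=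
      Module.card_eq_pow_finrank (K := K) (V := F)
    rw [hF, hK] at hc
    exact Nat.pow_right_injective hq1 hc.symm
  have hfinrankKK : Module.finrank K (K × K) = 2 := by
    simp [Module.finrank_prod]
  -- the linear equivalence
  set L1e : (K × K) ≃ₗ[K] F :=
    L.linearEquivOfInjective hinj (by rw [hfinrankKK, hfinrankF]) with hL1edef
  have hL1eapply : ∀ p : K × K, L1e p = algebraMap K F p.1 * w + algebraMap K F p.2 * w ^ 2 := by
    intro p
    rw [hL1edef, LinearMap.linearEquivOfInjective_apply, hLapply]
  refine ⟨L1e, L1e.symm, ?_⟩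
  intro x
  set pr := L1e.symm x with hprdef
  set u : K := pr.1 with hudef
  set v : K := pr.2 with hvdef
  set a : F := algebraMap K F u with hadef
  set b : F := algebraMap K F v with hbdef
  have hX : x = a * w + b * w ^ 2 := by
    have : L1e pr = x := by rw [hprdef]; exact L1e.apply_symm_apply x
    rw [← this, hL1eapply]
  have haq : a ^ q = a := by rw [hadef]; exact hKfix u
  have hbq : b ^ q = b := by rw [hbdef]; exact hKfix v
  -- the Frobenius image of x
  have hY : x ^ q = a * w ^ 2 + b * w := by
    rw [hX, hfrob, mul_pow, mul_pow, haq, hbq, hwq, ← pow_mul]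
    have : w ^ (2 * q) = w := by rw [mul_comm, pow_mul, hwq, ← pow_mul, hw4]
    rw [this]
  set A : F := a ^ Q1 with hAdef
  set B : F := b ^ Q1 with hBdef
  set C : F := a ^ Q2 with hCdef
  set D : F := b ^ Q2 with hDdef
  have hw2Q1 : (w ^ 2) ^ Q1 = w := by
    rw [← pow_mul, mul_comm, pow_mul, hwQ1, ← pow_mul, hw4]
  have hw2Q2 : (w ^ 2) ^ Q2 = w ^ 2 := by
    rw [← pow_mul, mul_comm, pow_mul, hwQ2]
  have hXQ1 : x ^ Q1 = A * w ^ 2 + B * w := by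
    rw [hX, hfrobQ1, mul_pow, mul_pow, hwQ1, hw2Q1, ← hAdef, ← hBdef]
  have hXQ2 : x ^ Q2 = C * w + D * w ^ 2 := by
    rw [hX, hfrobQ2, mul_pow, mul_pow, hwQ2, hw2Q2, ← hCdef, ← hDdef]
  have hYQ1 : (x ^ q) ^ Q1 = A * w + B * w ^ 2 := by
    rw [hY, hfrobQ1, mul_pow, mul_pow, hwQ1, hw2Q1, ← hAdef, ← hBdef]
  have hYQ2 : (x ^ q) ^ Q2 = C * w ^ 2 + D * w := by
    rw [hY, hfrobQ2, mul_pow, mul_pow, hwQ2, hw2Q2, ← hCdef, ← hDdef]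
  -- rewrite the exponents
  have t1 : x ^ (q * (Q1 + Q2) + 1) = (x ^ q) ^ Q1 * (x ^ q) ^ Q2 * x := by
    rw [show q * (Q1 + Q2) + 1 = q * Q1 + q * Q2 + 1 by ring, pow_succ, pow_add,
      pow_mul, pow_mul]
  have t2 : x ^ (q * (Q1 + 1) + Q2) = (x ^ q) ^ Q1 * x ^ q * x ^ Q2 := by
    rw [show q * (Q1 + 1) + Q2 = q * Q1 + q + Q2 by ring, pow_add, pow_add, pow_mul]
  have t3 : x ^ (q * Q1 + Q2 + 1) = (x ^ q) ^ Q1 * x ^ Q2 * x := by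
    rw [pow_succ, pow_add, pow_mul]
  have t4 : x ^ (q * (Q2 + 1) + Q1) = (x ^ q) ^ Q2 * x ^ q * x ^ Q1 := by
    rw [show q * (Q2 + 1) + Q1 = q * Q2 + q + Q1 by ring, pow_add, pow_add, pow_mul]
  have t5 : x ^ (Q1 + Q2 + 1) = x ^ Q1 * x ^ Q2 * x := by
    rw [pow_succ, pow_add]
  -- rewrite the right-hand side
  have hRHS : L1e (u ^ (Q1 + Q2 + 1), v ^ (Q1 + Q2 + 1)) = A * C * a * w + B * D * b * w ^ 2 := by
    rw [hL1eapply]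
    simp only [map_pow]
    rw [← hadef, ← hbdef, hAdef, hBdef, hCdef, hDdef]
    ring
  rw [t1, t2, t3, t4, t5, hYQ1, hYQ2, hXQ1, hXQ2, hY, hRHS, hX]
  linear_combination ((14:F)*B*D*b + (14:F)*B*D*a + (14:F)*B*C*b + (12:F)*B*C*a + (14:F)*A*D*b
      + (12:F)*A*D*a + (12:F)*A*C*b + (12:F)*A*C*a + (10:F)*w*B*D*b + (8:F)*w*B*D*a
      + (8:F)*w*B*C*b + (8:F)*w*B*C*a + (8:F)*w*A*D*b + (8:F)*w*A*D*a + (8:F)*w*A*C*b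
      + (7:F)*w*A*C*a + (5:F)*w^2*B*D*b + (6:F)*w^2*B*D*a + (6:F)*w^2*B*C*b + (4:F)*w^2*B*C*a
      + (6:F)*w^2*A*D*b + (4:F)*w^2*A*D*a + (4:F)*w^2*A*C*b + (5:F)*w^2*A*C*a + (4:F)*w^3*B*D*b
      + (2:F)*w^3*B*D*a + (2:F)*w^3*B*C*b + (3:F)*w^3*B*C*a + (2:F)*w^3*A*D*b + (3:F)*w^3*A*D*a
      + (3:F)*w^3*A*C*b + w^3*A*C*a + w^4*B*D*b + w^4*B*D*a + w^4*B*C*b + w^4*A*D*b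
      + w^4*A*C*a) * hwsq
    + ((7:F)*B*D*b + (7:F)*B*D*a + (7:F)*B*C*b + (6:F)*B*C*a + (7:F)*A*D*b + (6:F)*A*D*a
      + (6:F)*A*C*b + (6:F)*A*C*a + (12:F)*w*B*D*b + (11:F)*w*B*D*a + (11:F)*w*B*C*b
      + (10:F)*w*B*C*a + (11:F)*w*A*D*b + (10:F)*w*A*D*a + (10:F)*w*A*C*b + (9:F)*w*A*C*a) * h2
end

section
/- Suppose m is even. Then f_B is linear equivalent over F_q to the monomial map x ↦ x^{Q1+Q2+1+r_B(q−1)} on F_{q^2}; that is, there exist F_q-linear bijections L1, L2 : F_{q^2} → F_{q^2} such that for all x in F_{q^2}, f_B(x) = L1((L2(x))^{Q1+Q2+1+r_B(q−1)}). -/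
/-- The integer `r_B` from Theorem B (ii). -/
def rB (i j : ℕ) : ℕ :=
  if Odd i ∧ Even j then 0
  else if Even i ∧ Odd j then 1
  else if Even i then  -- i even, j even
    (if 2 ^ i ≤ 2 ^ j then 2 ^ i else 2 ^ j + 1)
  else  -- i odd, j odd
    (if 2 ^ i < 2 ^ j then 2 ^ i + 1 else 2 ^ j)

/-- Theorem B, case (ii), linear equivalence part: for `m` even, `f_B` is
linear equivalent over `F_q` to `x ↦ x^{Q1+Q2+1+r_B(q-1)}` on `F_{q^2}`. -/
theorem fB_linear_equiv_of_even
    (m i j : ℕ) (hm : 0 < m) (hi : 0 < i) (hj : 0 < j)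
    (q Q1 Q2 : ℕ) (hq : q = 2 ^ m) (hQ1 : Q1 = 2 ^ i) (hQ2 : Q2 = 2 ^ j)
    (K F : Type*) [Field K] [Fintype K] [Field F] [Fintype F] [Algebra K F]
    (hK : Fintype.card K = q) (hF : Fintype.card F = q ^ 2)
    (hme : Even m) :
    ∃ (L1 L2 : F ≃ₗ[K] F),
      ∀ x : F,
        x ^ (q * (Q1 + Q2) + 1) + x ^ (q * (Q1 + 1) + Q2) + x ^ (q * Q1 + Q2 + 1) +
          x ^ (q * (Q2 + 1) + Q1) + x ^ (Q1 + Q2 + 1) =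
        L1 ((L2 x) ^ (Q1 + Q2 + 1 + rB i j * (q - 1))) := by
  classical
  have hq0 : 0 < q := by rw [hq]; positivity
  have hq2' : 2 ≤ q := by
    rw [hq]
    calc 2 = 2 ^ 1 := (pow_one 2).symm
    _ ≤ 2 ^ m := Nat.pow_le_pow_right (by norm_num) hm
  have h4le : 4 ≤ q ^ 2 := by
    rw [pow_two]
    calc 4 = 2 * 2 := by norm_num
    _ ≤ q * q := Nat.mul_le_mul hq2' hq2'
  -- characteristic 2
  have h2 : (2 : F) = 0 := by
    have hc : ((Fintype.card F : ℕ) : F) = 0 := FiniteField.cast_card_eq_zero F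
    rw [hF, hq] at hc
    have hc2 : ((2 : F) ^ m) ^ 2 = 0 := by push_cast at hc; exact_mod_cast hc
    have hm0 : (2 : F) ^ m = 0 := (pow_eq_zero_iff (two_ne_zero)).mp hc2
    exact (pow_eq_zero_iff hm.ne').mp hm0
  haveI hchar : CharP F 2 := by
    have hdvd : ringChar F ∣ 2 := ringChar.dvd (by exact_mod_cast h2)
    rcases (Nat.dvd_prime Nat.prime_two).mp hdvd with h1 | h1
    · exact absurd h1 (CharP.char_ne_one F (ringChar F))
    · have := ringChar.charP F
      rwa [h1] at this
  -- Frobenius maps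
  have hfrob : ∀ (k : ℕ) (a b : F), (a + b) ^ 2 ^ k = a ^ 2 ^ k + b ^ 2 ^ k := by
    intro k a b; exact add_pow_char_pow (R := F) (p := 2) (n := k) (x := a) (y := b)
  have hfq : ∀ a b : F, (a + b) ^ q = a ^ q + b ^ q := by
    intro a b; rw [hq]; exact hfrob m a b
  have hfQ1 : ∀ a b : F, (a + b) ^ Q1 = a ^ Q1 + b ^ Q1 := by
    intro a b; rw [hQ1]; exact hfrob i a b
  have hfQ2 : ∀ a b : F, (a + b) ^ Q2 = a ^ Q2 + b ^ Q2 := by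
    intro a b; rw [hQ2]; exact hfrob j a b
  have hxqq : ∀ x : F, (x ^ q) ^ q = x := by
    intro x
    rw [← pow_mul, ← pow_two, ← hF]
    exact FiniteField.pow_card x
  have hconjpow : ∀ (x : F) (k : ℕ), ((x ^ q) ^ k) ^ q = x ^ k := by
    intro x k; rw [pow_right_comm, hxqq]
  have hconjpow' : ∀ (x : F) (k : ℕ), (x ^ k) ^ q = (x ^ q) ^ k :=
    fun x k => pow_right_comm x k q
  -- powers of two modulo 3
  have hpow2 : ∀ k : ℕ, 2 ^ k % 3 = if Even k then 1 else 2 := by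
    intro k
    induction k with
    | zero => simp
    | succ n ih =>
      rw [pow_succ]
      obtain ⟨A, hA⟩ : ∃ a, 2 ^ n = a := ⟨_, rfl⟩
      rw [hA] at ih ⊢
      by_cases h : Even n
      · rw [if_pos h] at ih
        rw [if_neg (by simp [Nat.even_add_one, h])]
        omega
      · rw [if_neg h] at ih
        rw [if_pos (Nat.even_add_one.mpr h)]
        omega
  have hq3 : q % 3 = 1 := by rw [hq, hpow2 m, if_pos hme]
  have h3dvd : 3 ∣ q ^ 2 - 1 := by
    have h1 : q ^ 2 % 3 = 1 := by rw [Nat.pow_mod, hq3]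
    obtain ⟨Z, hZ⟩ : ∃ z, q ^ 2 = z := ⟨_, rfl⟩
    rw [hZ] at h1 ⊢
    rw [hZ] at h4le
    omega
  have hnpos : 0 < q ^ 2 - 1 := by omega
  -- construct a primitive cube root of unity
  obtain ⟨g, hg⟩ := IsCyclic.exists_generator (α := Fˣ)
  have hordg : orderOf g = q ^ 2 - 1 := by
    rw [orderOf_eq_card_of_forall_mem_zpowers hg, Nat.card_units, Nat.card_eq_fintype_card, hF]
  have hn3 : 3 * ((q ^ 2 - 1) / 3) = q ^ 2 - 1 := Nat.mul_div_cancel' h3dvd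
  set ωu : Fˣ := g ^ ((q ^ 2 - 1) / 3) with hωu
  have hωu3 : ωu ^ 3 = 1 := by
    rw [hωu, ← pow_mul, mul_comm, hn3, ← hordg]
    exact pow_orderOf_eq_one g
  have hωune : ωu ≠ 1 := by
    intro h
    have hd := orderOf_dvd_of_pow_eq_one h
    rw [hordg] at hd
    have hdivpos : 0 < (q ^ 2 - 1) / 3 :=
      Nat.div_pos (Nat.le_of_dvd hnpos h3dvd) (by norm_num)
    have hlt : (q ^ 2 - 1) / 3 < q ^ 2 - 1 := Nat.div_lt_self hnpos (by norm_num)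
    have hle := Nat.le_of_dvd hdivpos hd
    exact absurd (lt_of_le_of_lt hle hlt) (lt_irrefl _)
  set ω : F := ((ωu : Fˣ) : F) with hωdef
  have hω3 : ω ^ 3 = 1 := by
    rw [hωdef, ← Units.val_pow_eq_pow_val, hωu3, Units.val_one]
  have hω1 : ω ≠ 1 := by
    intro h
    exact hωune (Units.val_eq_one.mp h)
  have hω0 : ω ≠ 0 := by
    intro h
    rw [h] at hω3
    simp at hω3
  have hω : ω ^ 2 + ω + 1 = 0 := by
    have h1 : (ω - 1) * (ω ^ 2 + ω + 1) = 0 := by linear_combination hω3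
    rcases mul_eq_zero.mp h1 with h | h
    · exact absurd (by linear_combination h) hω1
    · exact h
  have hωmod : ∀ k : ℕ, ω ^ k = ω ^ (k % 3) := by
    intro k
    conv_lhs => rw [← Nat.div_add_mod k 3]
    rw [pow_add, pow_mul, hω3, one_pow, one_mul]
  have hωq : ω ^ q = ω := by rw [hωmod q, hq3, pow_one]
  have hω2q : (ω ^ 2) ^ q = ω ^ 2 := by rw [← pow_mul, mul_comm, pow_mul, hωq]
  have hω2ne1 : ω ^ 2 ≠ 1 := by
    intro h
    apply hω1
    linear_combination hω3 - ω * h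
  have hωne2 : ω ≠ ω ^ 2 := by
    intro h
    apply hω2ne1
    linear_combination (-ω) * h + hω3 + (ω ^ 2 - ω ^ 3) * h2
  -- distinct elements have distinct squares (char 2)
  have hsqne : ∀ a b : F, a ≠ b → a * a ≠ b * b := by
    intro a b hab h
    apply hab
    have h4 : (a + b) * (a + b) = 0 := by linear_combination h + (a * b + b * b) * h2
    have h5 : a + b = 0 := by
      rcases mul_eq_zero.mp h4 with h' | h' <;> exact h'
    linear_combination h5 - b * h2
  -- conjugation helpers
  have hconj1 : ∀ c : F, c ^ q = c → ∀ x : F, (x + c * x ^ q) ^ q = x ^ q + c * x := by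
    intro c hc x; rw [hfq, mul_pow, hc, hxqq]
  have hconj1' : ∀ c : F, c ^ q = c → ∀ x : F, (x ^ q + c * x) ^ q = x + c * x ^ q := by
    intro c hc x; rw [hfq, mul_pow, hc, hxqq]
  have hconjQ1 : ∀ c : F, c ^ q = c → ∀ x : F,
      (x ^ Q1 + c * (x ^ q) ^ Q1) ^ q = (x ^ q) ^ Q1 + c * x ^ Q1 := by
    intro c hc x; rw [hfq, mul_pow, hc, hconjpow' x Q1, hconjpow x Q1]
  have hconjQ1' : ∀ c : F, c ^ q = c → ∀ x : F,
      ((x ^ q) ^ Q1 + c * x ^ Q1) ^ q = x ^ Q1 + c * (x ^ q) ^ Q1 := by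
    intro c hc x; rw [hfq, mul_pow, hc, hconjpow x Q1, hconjpow' x Q1]
  have hconjQ2 : ∀ c : F, c ^ q = c → ∀ x : F,
      (x ^ Q2 + c * (x ^ q) ^ Q2) ^ q = (x ^ q) ^ Q2 + c * x ^ Q2 := by
    intro c hc x; rw [hfq, mul_pow, hc, hconjpow' x Q2, hconjpow x Q2]
  have hconjQ2' : ∀ c : F, c ^ q = c → ∀ x : F,
      ((x ^ q) ^ Q2 + c * x ^ Q2) ^ q = x ^ Q2 + c * (x ^ q) ^ Q2 := by
    intro c hc x; rw [hfq, mul_pow, hc, hconjpow x Q2, hconjpow' x Q2]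
  -- builder of K-linear bijections z ↦ c1*z + c2*z^q
  have hkq : ∀ k : K, k ^ q = k := by intro k; rw [← hK]; exact FiniteField.pow_card k
  have build : ∀ c1 c2 : F, c1 * c1 ^ q ≠ c2 * c2 ^ q →
      ∃ L : F ≃ₗ[K] F, ∀ z : F, L z = c1 * z + c2 * z ^ q := by
    intro c1 c2 hcc
    let LM : F →ₗ[K] F :=
      { toFun := fun z => c1 * z + c2 * z ^ q
        map_add' := by
          intro a b
          show c1 * (a + b) + c2 * (a + b) ^ q = c1 * a + c2 * a ^ q + (c1 * b + c2 * b ^ q)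
          rw [hfq]; ring
        map_smul' := by
          intro k a
          show c1 * (k • a) + c2 * (k • a) ^ q = (RingHom.id K) k • (c1 * a + c2 * a ^ q)
          simp only [RingHom.id_apply, Algebra.smul_def]
          rw [mul_pow, ← map_pow, hkq]
          ring }
    have hinj : Function.Injective LM := by
      intro a b hab
      simp only [LM, LinearMap.coe_mk, AddHom.coe_mk] at hab
      by_contra hne
      set z := a - b with hzdef
      have hz0 : z ≠ 0 := sub_ne_zero.mpr hne
      have hfq' : (a - b) ^ q = a ^ q - b ^ q := by
        have h := hfq (a - b) b
        have h2' : a - b + b = a := by ring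
        rw [h2'] at h
        linear_combination -h
      have hE : c1 * z + c2 * z ^ q = 0 := by
        rw [hzdef, hfq']
        linear_combination hab
      have hE1 : c1 * z = c2 * z ^ q := by
        linear_combination hE - (c2 * z ^ q) * h2
      have hE2 : c1 ^ q * z ^ q = c2 ^ q * z := by
        have h := congrArg (· ^ q) hE1
        simp only [mul_pow, hxqq] at h
        exact h
      have h3 : (c1 * c1 ^ q) * (z * z ^ q) = (c2 * c2 ^ q) * (z * z ^ q) := by
        linear_combination (c1 ^ q * z ^ q) * hE1 + (c2 * z ^ q) * hE2
      have hzz : z * z ^ q ≠ 0 := mul_ne_zero hz0 (pow_ne_zero _ hz0)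
      exact hcc (mul_right_cancel₀ hzz h3)
    exact ⟨LinearEquiv.ofBijective LM (Finite.injective_iff_bijective.mp hinj),
      fun z => rfl⟩
  -- the six cases
  rcases Nat.even_or_odd i with hie | hio
  · rcases Nat.even_or_odd j with hje | hjo
    · -- i even, j even
      have hQ1m : Q1 % 3 = 1 := by rw [hQ1, hpow2 i, if_pos hie]
      have hQ2m : Q2 % 3 = 1 := by rw [hQ2, hpow2 j, if_pos hje]
      have hAQ1 : ∀ a b : F, (a + ω * b) ^ Q1 = a ^ Q1 + ω * b ^ Q1 := by
        intro a b; rw [hfQ1, mul_pow, hωmod Q1, hQ1m, pow_one]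
      have hAQ2 : ∀ a b : F, (a + ω * b) ^ Q2 = a ^ Q2 + ω * b ^ Q2 := by
        intro a b; rw [hfQ2, mul_pow, hωmod Q2, hQ2m, pow_one]
      have hni : ¬(Odd i ∧ Even j) := fun h => (Nat.not_odd_iff_even.mpr hie) h.1
      have hnj : ¬(Even i ∧ Odd j) := fun h => (Nat.not_odd_iff_even.mpr hje) h.2
      rcases le_or_gt Q1 Q2 with hle | hgt
      · -- r = Q1
        have hrb : rB i j = Q1 := by
          simp only [rB]
          rw [if_neg hni, if_neg hnj, if_pos hie,
            if_pos (show 2 ^ i ≤ 2 ^ j by rw [← hQ1, ← hQ2]; exact hle), ← hQ1]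
        have hE : Q1 + Q2 + 1 + Q1 * (q - 1) = Q2 + 1 + q * Q1 := by
          obtain ⟨q', rfl⟩ : ∃ q', q = q' + 1 := ⟨q - 1, by omega⟩
          simp only [Nat.add_sub_cancel]; ring
        obtain ⟨L2e, hL2e⟩ := build 1 ω (by rw [one_pow, hωq]; exact hsqne 1 ω (Ne.symm hω1))
        obtain ⟨L1e, hL1e⟩ := build ω (ω ^ 2) (by rw [hωq, hω2q]; exact hsqne ω (ω ^ 2) hωne2)
        refine ⟨L1e, L2e, fun x => ?_⟩
        rw [hL2e, hL1e, one_mul x, hrb, hE]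
        have hT1 : (x + ω * x ^ q) ^ (Q2 + 1 + q * Q1)
            = (x ^ Q2 + ω * (x ^ q) ^ Q2) * (x + ω * x ^ q) * ((x ^ q) ^ Q1 + ω * x ^ Q1) := by
          rw [pow_add, pow_add, pow_one, pow_mul, hconj1 ω hωq x, hAQ2, hAQ1]
        rw [hT1, mul_pow, mul_pow, hconjQ2 ω hωq x, hconj1 ω hωq x, hconjQ1' ω hωq x]
        linear_combination (norm := ring1) (2*(x ^ q)*((x ^ q) ^ Q1)*((x ^ q) ^ Q2) - (x ^ q)*((x ^ q) ^ Q1)*(x ^ Q2) - (x ^ q)*(x ^ Q1)*((x ^ q) ^ Q2) + 2*(x ^ q)*(x ^ Q1)*(x ^ Q2) - x*((x ^ q) ^ Q1)*((x ^ q) ^ Q2) - x*((x ^ q) ^ Q1)*(x ^ Q2) + 2*x*(x ^ Q1)*((x ^ q) ^ Q2) - x*(x ^ Q1)*(x ^ Q2) - 2*ω*(x ^ q)*((x ^ q) ^ Q1)*((x ^ q) ^ Q2) + ω*(x ^ q)*((x ^ q) ^ Q1)*(x ^ Q2) + ω*(x ^ q)*(x ^ Q1)*((x ^ q) ^ Q2)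 - 2*ω*(x ^ q)*(x ^ Q1)*(x ^ Q2) + ω*x*((x ^ q) ^ Q1)*((x ^ q) ^ Q2) - 2*ω*x*(x ^ Q1)*((x ^ q) ^ Q2) + ω*x*(x ^ Q1)*(x ^ Q2) - ω ^ 2*(x ^ q)*((x ^ q) ^ Q1)*(x ^ Q2) - ω ^ 2*(x ^ q)*(x ^ Q1)*((x ^ q) ^ Q2) - ω ^ 2*x*((x ^ q) ^ Q1)*((x ^ q) ^ Q2) + ω ^ 2*x*((x ^ q) ^ Q1)*(x ^ Q2) - ω ^ 2*x*(x ^ Q1)*(x ^ Q2) - ω ^ 3*x*((x ^ q) ^ Q1)*(x ^ Q2)) * hω + (-(x ^ q)*((x ^ q) ^ Q1)*((x ^ q) ^ Q2) + (x ^ q)*((x ^ q) ^ Q1)*(x ^ Q2) + (x ^ q)*(x ^ Q1)*((x ^ q) ^ Q2) - (x ^ q)*(x ^ Q1)*(x ^ Q2) + x*((x ^ q) ^ Q1)*((x ^ q) ^ Q2) + x*((x ^ q) ^ Q1)*(x ^ Q2) - x*(x ^ Q1)*((x ^ q) ^ Q2) + x*(x ^ Q1)*(x ^ Q2)) * h2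
      · -- r = Q2 + 1
        have hrb : rB i j = Q2 + 1 := by
          simp only [rB]
          rw [if_neg hni, if_neg hnj, if_pos hie,
            if_neg (show ¬(2 ^ i ≤ 2 ^ j) by rw [← hQ1, ← hQ2]; exact not_le.mpr hgt), ← hQ2]
        have hE : Q1 + Q2 + 1 + (Q2 + 1) * (q - 1) = Q1 + q * Q2 + q := by
          obtain ⟨q', rfl⟩ : ∃ q', q = q' + 1 := ⟨q - 1, by omega⟩
          simp only [Nat.add_sub_cancel]; ring
        obtain ⟨L2e, hL2e⟩ := build 1 ω (by rw [one_pow, hωq]; exact hsqne 1 ω (Ne.symm hω1))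
        obtain ⟨L1e, hL1e⟩ := build (ω ^ 2) ω
          (by rw [hωq, hω2q]; exact hsqne (ω ^ 2) ω (Ne.symm hωne2))
        refine ⟨L1e, L2e, fun x => ?_⟩
        rw [hL2e, hL1e, one_mul x, hrb, hE]
        have hT1 : (x + ω * x ^ q) ^ (Q1 + q * Q2 + q)
            = (x ^ Q1 + ω * (x ^ q) ^ Q1) * ((x ^ q) ^ Q2 + ω * x ^ Q2) * (x ^ q + ω * x) := by
          rw [pow_add, pow_add, pow_mul, hconj1 ω hωq x, hAQ1, hAQ2]
        rw [hT1, mul_pow, mul_pow, hconjQ1 ω hωq x, hconjQ2' ω hωq x, hconj1' ω hωq x]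
        linear_combination (norm := ring1) (2*(x ^ q)*((x ^ q) ^ Q1)*((x ^ q) ^ Q2) - (x ^ q)*((x ^ q) ^ Q1)*(x ^ Q2) - (x ^ q)*(x ^ Q1)*((x ^ q) ^ Q2) + 2*(x ^ q)*(x ^ Q1)*(x ^ Q2) - x*((x ^ q) ^ Q1)*((x ^ q) ^ Q2) - x*((x ^ q) ^ Q1)*(x ^ Q2) + 2*x*(x ^ Q1)*((x ^ q) ^ Q2) - x*(x ^ Q1)*(x ^ Q2) - 2*ω*(x ^ q)*((x ^ q) ^ Q1)*((x ^ q) ^ Q2) + ω*(x ^ q)*((x ^ q) ^ Q1)*(x ^ Q2) + ω*(x ^ q)*(x ^ Q1)*((x ^ q) ^ Q2) - 2*ω*(x ^ q)*(x ^ Q1)*(x ^ Q2) + ω*x*((x ^ q) ^ Q1)*((x ^ q) ^ Q2) - 2*ω*x*(x ^ Q1)*((x ^ q) ^ Q2) + ω*x*(x ^ Q1)*(x ^ Q2) - ω ^ 2*(x ^ q)*((x ^ q) ^ Q1)*(x ^ Q2) - ω ^ 2*(x ^ q)*(x ^ Q1)*((x ^ q) ^ Q2) - ω ^ 2*x*((x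 ^ q) ^ Q1)*((x ^ q) ^ Q2) + ω ^ 2*x*((x ^ q) ^ Q1)*(x ^ Q2) - ω ^ 2*x*(x ^ Q1)*(x ^ Q2) - ω ^ 3*x*((x ^ q) ^ Q1)*(x ^ Q2)) * hω + (-(x ^ q)*((x ^ q) ^ Q1)*((x ^ q) ^ Q2) + (x ^ q)*((x ^ q) ^ Q1)*(x ^ Q2) + (x ^ q)*(x ^ Q1)*((x ^ q) ^ Q2) - (x ^ q)*(x ^ Q1)*(x ^ Q2) + x*((x ^ q) ^ Q1)*((x ^ q) ^ Q2) + x*((x ^ q) ^ Q1)*(x ^ Q2) - x*(x ^ Q1)*((x ^ q) ^ Q2) + x*(x ^ Q1)*(x ^ Q2)) * h2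
    · -- i even, j odd : r = 1
      have hQ1m : Q1 % 3 = 1 := by rw [hQ1, hpow2 i, if_pos hie]
      have hQ2m : Q2 % 3 = 2 := by rw [hQ2, hpow2 j, if_neg (Nat.not_even_iff_odd.mpr hjo)]
      have hAQ1 : ∀ a b : F, (a + ω * b) ^ Q1 = a ^ Q1 + ω * b ^ Q1 := by
        intro a b; rw [hfQ1, mul_pow, hωmod Q1, hQ1m, pow_one]
      have hAQ2 : ∀ a b : F, (a + ω * b) ^ Q2 = a ^ Q2 + ω ^ 2 * b ^ Q2 := by
        intro a b; rw [hfQ2, mul_pow, hωmod Q2, hQ2m]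
      have hni : ¬(Odd i ∧ Even j) := fun h => (Nat.not_odd_iff_even.mpr hie) h.1
      have hrb : rB i j = 1 := by
        simp only [rB]
        rw [if_neg hni, if_pos ⟨hie, hjo⟩]
      have hE : Q1 + Q2 + 1 + 1 * (q - 1) = Q1 + Q2 + q := by
        obtain ⟨q', rfl⟩ : ∃ q', q = q' + 1 := ⟨q - 1, by omega⟩
        simp only [Nat.add_sub_cancel]; ring
      obtain ⟨L2e, hL2e⟩ := build 1 ω (by rw [one_pow, hωq]; exact hsqne 1 ω (Ne.symm hω1))
      obtain ⟨L1e, hL1e⟩ := build 1 (ω ^ 2)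
        (by rw [one_pow, hω2q]; exact hsqne 1 (ω ^ 2) (Ne.symm hω2ne1))
      refine ⟨L1e, L2e, fun x => ?_⟩
      rw [hL2e, hL1e, one_mul x, hrb, hE]
      have hT1 : (x + ω * x ^ q) ^ (Q1 + Q2 + q)
          = (x ^ Q1 + ω * (x ^ q) ^ Q1) * (x ^ Q2 + ω ^ 2 * (x ^ q) ^ Q2) * (x ^ q + ω * x) := by
        rw [pow_add, pow_add, hconj1 ω hωq x, hAQ1, hAQ2]
      rw [hT1, mul_pow, mul_pow, hconjQ1 ω hωq x, hconjQ2 (ω ^ 2) hω2q x, hconj1' ω hωq x]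
      linear_combination (norm := ring1) (2*(x ^ q)*((x ^ q) ^ Q1)*((x ^ q) ^ Q2) - (x ^ q)*((x ^ q) ^ Q1)*(x ^ Q2) - (x ^ q)*(x ^ Q1)*((x ^ q) ^ Q2) + (x ^ q)*(x ^ Q1)*(x ^ Q2) - x*((x ^ q) ^ Q1)*((x ^ q) ^ Q2) - x*((x ^ q) ^ Q1)*(x ^ Q2) + 2*x*(x ^ Q1)*((x ^ q) ^ Q2) - x*(x ^ Q1)*(x ^ Q2) - 2*ω*(x ^ q)*((x ^ q) ^ Q1)*((x ^ q) ^ Q2) + ω*(x ^ q)*(x ^ Q1)*((x ^ q) ^ Q2) - ω*(x ^ q)*(x ^ Q1)*(x ^ Q2) + ω*x*((x ^ q) ^ Q1)*((x ^ q) ^ Q2) + ω*x*((x ^ q) ^ Q1)*(x ^ Q2) - 2*ω*x*(x ^ Q1)*((x ^ q) ^ Q2) + ω ^ 2*(x ^ q)*((x ^ q) ^ Q1)*(x ^ Q2) - ω ^ 2*(x ^ q)*(x ^ Q1)*((x ^ q) ^ Q2) - ω ^ 2*x*((x ^ q) ^ Q1)*((x ^ q) ^ Q2) - ω ^ 2*x*((x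 ^ q) ^ Q1)*(x ^ Q2) + ω ^ 2*x*(x ^ Q1)*(x ^ Q2) - ω ^ 3*(x ^ q)*((x ^ q) ^ Q1)*(x ^ Q2) + ω ^ 3*(x ^ q)*(x ^ Q1)*(x ^ Q2) - ω ^ 3*x*(x ^ Q1)*(x ^ Q2) - ω ^ 4*(x ^ q)*(x ^ Q1)*(x ^ Q2)) * hω + (-(x ^ q)*((x ^ q) ^ Q1)*((x ^ q) ^ Q2) + (x ^ q)*((x ^ q) ^ Q1)*(x ^ Q2) + (x ^ q)*(x ^ Q1)*((x ^ q) ^ Q2) - (x ^ q)*(x ^ Q1)*(x ^ Q2) + x*((x ^ q) ^ Q1)*((x ^ q) ^ Q2) + x*((x ^ q) ^ Q1)*(x ^ Q2) - x*(x ^ Q1)*((x ^ q) ^ Q2) + x*(x ^ Q1)*(x ^ Q2)) * h2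
  · rcases Nat.even_or_odd j with hje | hjo
    · -- i odd, j even : r = 0
      have hQ1m : Q1 % 3 = 2 := by rw [hQ1, hpow2 i, if_neg (Nat.not_even_iff_odd.mpr hio)]
      have hQ2m : Q2 % 3 = 1 := by rw [hQ2, hpow2 j, if_pos hje]
      have hAQ1 : ∀ a b : F, (a + ω * b) ^ Q1 = a ^ Q1 + ω ^ 2 * b ^ Q1 := by
        intro a b; rw [hfQ1, mul_pow, hωmod Q1, hQ1m]
      have hAQ2 : ∀ a b : F, (a + ω * b) ^ Q2 = a ^ Q2 + ω * b ^ Q2 := by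
        intro a b; rw [hfQ2, mul_pow, hωmod Q2, hQ2m, pow_one]
      have hrb : rB i j = 0 := by
        simp only [rB]
        rw [if_pos ⟨hio, hje⟩]
      have hE : Q1 + Q2 + 1 + 0 * (q - 1) = Q1 + Q2 + 1 := by simp
      obtain ⟨L2e, hL2e⟩ := build 1 ω (by rw [one_pow, hωq]; exact hsqne 1 ω (Ne.symm hω1))
      obtain ⟨L1e, hL1e⟩ := build (ω ^ 2) 1
        (by rw [one_pow, hω2q]; exact hsqne (ω ^ 2) 1 hω2ne1)
      refine ⟨L1e, L2e, fun x => ?_⟩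
      rw [hL2e, hL1e, one_mul x, hrb, hE]
      have hT1 : (x + ω * x ^ q) ^ (Q1 + Q2 + 1)
          = (x ^ Q1 + ω ^ 2 * (x ^ q) ^ Q1) * (x ^ Q2 + ω * (x ^ q) ^ Q2) * (x + ω * x ^ q) := by
        rw [pow_add, pow_add, pow_one, hAQ1, hAQ2]
      rw [hT1, mul_pow, mul_pow, hconjQ1 (ω ^ 2) hω2q x, hconjQ2 ω hωq x, hconj1 ω hωq x]
      linear_combination (norm := ring1) ((x ^ q)*((x ^ q) ^ Q1)*((x ^ q) ^ Q2) - (x ^ q)*((x ^ q) ^ Q1)*(x ^ Q2) - (x ^ q)*(x ^ Q1)*((x ^ q) ^ Q2) + 2*(x ^ q)*(x ^ Q1)*(x ^ Q2) - x*((x ^ q) ^ Q1)*((x ^ q) ^ Q2) - x*((x ^ q) ^ Q1)*(x ^ Q2) + 2*x*(x ^ Q1)*((x ^ q) ^ Q2) - x*(x ^ Q1)*(x ^ Q2) - ω*(x ^ q)*((x ^ q) ^ Q1)*((x ^ q) ^ Q2) + ω*(x ^ q)*(x ^ Q1)*((x ^ q) ^ Q2) - 2*ω*(x ^ q)*(x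 ^ Q1)*(x ^ Q2) + ω*x*((x ^ q) ^ Q1)*(x ^ Q2) - 2*ω*x*(x ^ Q1)*((x ^ q) ^ Q2) + ω*x*(x ^ Q1)*(x ^ Q2) + ω ^ 2*(x ^ q)*((x ^ q) ^ Q1)*(x ^ Q2) - ω ^ 2*(x ^ q)*(x ^ Q1)*((x ^ q) ^ Q2) + ω ^ 2*x*((x ^ q) ^ Q1)*((x ^ q) ^ Q2) - ω ^ 2*x*((x ^ q) ^ Q1)*(x ^ Q2) - ω ^ 2*x*(x ^ Q1)*(x ^ Q2) + ω ^ 3*(x ^ q)*((x ^ q) ^ Q1)*((x ^ q) ^ Q2) - ω ^ 3*(x ^ q)*((x ^ q) ^ Q1)*(x ^ Q2) - ω ^ 3*x*((x ^ q) ^ Q1)*((x ^ q) ^ Q2) - ω ^ 4*(x ^ q)*((x ^ q) ^ Q1)*((x ^ q) ^ Q2)) * hω + (-(x ^ q)*((x ^ q) ^ Q1)*((x ^ q) ^ Q2) + (x ^ q)*((x ^ q) ^ Q1)*(x ^ Q2) + (x ^ q)*(x ^ Q1)*((x ^ q) ^ Q2) - (x ^ q)*(x ^ Q1)*(x ^ Q2)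 + x*((x ^ q) ^ Q1)*((x ^ q) ^ Q2) + x*((x ^ q) ^ Q1)*(x ^ Q2) - x*(x ^ Q1)*((x ^ q) ^ Q2) + x*(x ^ Q1)*(x ^ Q2)) * h2
    · -- i odd, j odd
      have hQ1m : Q1 % 3 = 2 := by rw [hQ1, hpow2 i, if_neg (Nat.not_even_iff_odd.mpr hio)]
      have hQ2m : Q2 % 3 = 2 := by rw [hQ2, hpow2 j, if_neg (Nat.not_even_iff_odd.mpr hjo)]
      have hAQ1 : ∀ a b : F, (a + ω * b) ^ Q1 = a ^ Q1 + ω ^ 2 * b ^ Q1 := by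
        intro a b; rw [hfQ1, mul_pow, hωmod Q1, hQ1m]
      have hAQ2 : ∀ a b : F, (a + ω * b) ^ Q2 = a ^ Q2 + ω ^ 2 * b ^ Q2 := by
        intro a b; rw [hfQ2, mul_pow, hωmod Q2, hQ2m]
      have hni : ¬(Odd i ∧ Even j) := fun h => (Nat.not_even_iff_odd.mpr hjo) h.2
      have hnj : ¬(Even i ∧ Odd j) := fun h => (Nat.not_even_iff_odd.mpr hio) h.1
      rcases lt_or_ge Q1 Q2 with hlt | hge
      · -- r = Q1 + 1
        have hrb : rB i j = Q1 + 1 := by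
          simp only [rB]
          rw [if_neg hni, if_neg hnj, if_neg (Nat.not_even_iff_odd.mpr hio),
            if_pos (show 2 ^ i < 2 ^ j by rw [← hQ1, ← hQ2]; exact hlt), ← hQ1]
        have hE : Q1 + Q2 + 1 + (Q1 + 1) * (q - 1) = Q2 + q * Q1 + q := by
          obtain ⟨q', rfl⟩ : ∃ q', q = q' + 1 := ⟨q - 1, by omega⟩
          simp only [Nat.add_sub_cancel]; ring
        obtain ⟨L2e, hL2e⟩ := build 1 ω (by rw [one_pow, hωq]; exact hsqne 1 ω (Ne.symm hω1))
        obtain ⟨L1e, hL1e⟩ := build ω 1 (by rw [one_pow, hωq]; exact hsqne ω 1 hω1)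
        refine ⟨L1e, L2e, fun x => ?_⟩
        rw [hL2e, hL1e, one_mul x, hrb, hE]
        have hT1 : (x + ω * x ^ q) ^ (Q2 + q * Q1 + q)
            = (x ^ Q2 + ω ^ 2 * (x ^ q) ^ Q2) * ((x ^ q) ^ Q1 + ω ^ 2 * x ^ Q1) * (x ^ q + ω * x) := by
          rw [pow_add, pow_add, pow_mul, hconj1 ω hωq x, hAQ2, hAQ1]
        rw [hT1, mul_pow, mul_pow, hconjQ2 (ω ^ 2) hω2q x, hconjQ1' (ω ^ 2) hω2q x,
          hconj1' ω hωq x]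
        linear_combination (norm := ring1) (2*(x ^ q)*((x ^ q) ^ Q1)*((x ^ q) ^ Q2) - (x ^ q)*((x ^ q) ^ Q1)*(x ^ Q2) - (x ^ q)*(x ^ Q1)*((x ^ q) ^ Q2) + 2*(x ^ q)*(x ^ Q1)*(x ^ Q2) - x*((x ^ q) ^ Q1)*((x ^ q) ^ Q2) - x*((x ^ q) ^ Q1)*(x ^ Q2) + x*(x ^ Q1)*((x ^ q) ^ Q2) - x*(x ^ Q1)*(x ^ Q2) - 2*ω*(x ^ q)*((x ^ q) ^ Q1)*((x ^ q) ^ Q2) - 2*ω*(x ^ q)*(x ^ Q1)*(x ^ Q2) + ω*x*((x ^ q) ^ Q1)*((x ^ q) ^ Q2) + ω*x*((x ^ q) ^ Q1)*(x ^ Q2) - ω*x*(x ^ Q1)*((x ^ q) ^ Q2) + ω*x*(x ^ Q1)*(x ^ Q2) + ω ^ 2*(x ^ q)*((x ^ q) ^ Q1)*(x ^ Q2) + ω ^ 2*(x ^ q)*(x ^ Q1)*((x ^ q) ^ Q2) - ω ^ 2*x*((x ^ q) ^ Q1)*((x ^ q) ^ Q2) - ω ^ 2*x*((x ^ q) ^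 Q1)*(x ^ Q2) - ω ^ 2*x*(x ^ Q1)*(x ^ Q2) - ω ^ 3*(x ^ q)*((x ^ q) ^ Q1)*(x ^ Q2) - ω ^ 3*(x ^ q)*(x ^ Q1)*((x ^ q) ^ Q2) + ω ^ 3*x*(x ^ Q1)*((x ^ q) ^ Q2) - ω ^ 4*x*(x ^ Q1)*((x ^ q) ^ Q2)) * hω + (-(x ^ q)*((x ^ q) ^ Q1)*((x ^ q) ^ Q2) + (x ^ q)*((x ^ q) ^ Q1)*(x ^ Q2) + (x ^ q)*(x ^ Q1)*((x ^ q) ^ Q2) - (x ^ q)*(x ^ Q1)*(x ^ Q2) + x*((x ^ q) ^ Q1)*((x ^ q) ^ Q2) + x*((x ^ q) ^ Q1)*(x ^ Q2) - x*(x ^ Q1)*((x ^ q) ^ Q2) + x*(x ^ Q1)*(x ^ Q2)) * h2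
      · -- r = Q2
        have hrb : rB i j = Q2 := by
          simp only [rB]
          rw [if_neg hni, if_neg hnj, if_neg (Nat.not_even_iff_odd.mpr hio),
            if_neg (show ¬(2 ^ i < 2 ^ j) by rw [← hQ1, ← hQ2]; exact not_lt.mpr hge), ← hQ2]
        have hE : Q1 + Q2 + 1 + Q2 * (q - 1) = Q1 + 1 + q * Q2 := by
          obtain ⟨q', rfl⟩ : ∃ q', q = q' + 1 := ⟨q - 1, by omega⟩
          simp only [Nat.add_sub_cancel]; ring
        obtain ⟨L2e, hL2e⟩ := build 1 ω (by rw [one_pow, hωq]; exact hsqne 1 ω (Ne.symm hω1))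
        obtain ⟨L1e, hL1e⟩ := build 1 ω (by rw [one_pow, hωq]; exact hsqne 1 ω (Ne.symm hω1))
        refine ⟨L1e, L2e, fun x => ?_⟩
        rw [hL2e, hL1e, one_mul x, hrb, hE]
        have hT1 : (x + ω * x ^ q) ^ (Q1 + 1 + q * Q2)
            = (x ^ Q1 + ω ^ 2 * (x ^ q) ^ Q1) * (x + ω * x ^ q) * ((x ^ q) ^ Q2 + ω ^ 2 * x ^ Q2) := by
          rw [pow_add, pow_add, pow_one, pow_mul, hconj1 ω hωq x, hAQ1, hAQ2]
        rw [hT1, mul_pow, mul_pow, hconjQ1 (ω ^ 2) hω2q x, hconj1 ω hωq x,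
          hconjQ2' (ω ^ 2) hω2q x]
        linear_combination (norm := ring1) (2*(x ^ q)*((x ^ q) ^ Q1)*((x ^ q) ^ Q2) - (x ^ q)*((x ^ q) ^ Q1)*(x ^ Q2) - (x ^ q)*(x ^ Q1)*((x ^ q) ^ Q2) + 2*(x ^ q)*(x ^ Q1)*(x ^ Q2) - x*((x ^ q) ^ Q1)*((x ^ q) ^ Q2) - x*((x ^ q) ^ Q1)*(x ^ Q2) + x*(x ^ Q1)*((x ^ q) ^ Q2) - x*(x ^ Q1)*(x ^ Q2) - 2*ω*(x ^ q)*((x ^ q) ^ Q1)*((x ^ q) ^ Q2) - 2*ω*(x ^ q)*(x ^ Q1)*(x ^ Q2) + ω*x*((x ^ q) ^ Q1)*((x ^ q) ^ Q2) + ω*x*((x ^ q) ^ Q1)*(x ^ Q2) - ω*x*(x ^ Q1)*((x ^ q) ^ Q2) + ω*x*(x ^ Q1)*(x ^ Q2) + ω ^ 2*(x ^ q)*((x ^ q) ^ Q1)*(x ^ Q2) + ω ^ 2*(x ^ q)*(x ^ Q1)*((x ^ q) ^ Q2) - ω ^ 2*x*((x ^ q) ^ Q1)*((x ^ q) ^ Q2)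 - ω ^ 2*x*((x ^ q) ^ Q1)*(x ^ Q2) - ω ^ 2*x*(x ^ Q1)*(x ^ Q2) - ω ^ 3*(x ^ q)*((x ^ q) ^ Q1)*(x ^ Q2) - ω ^ 3*(x ^ q)*(x ^ Q1)*((x ^ q) ^ Q2) + ω ^ 3*x*(x ^ Q1)*((x ^ q) ^ Q2) - ω ^ 4*x*(x ^ Q1)*((x ^ q) ^ Q2)) * hω + (-(x ^ q)*((x ^ q) ^ Q1)*((x ^ q) ^ Q2) + (x ^ q)*((x ^ q) ^ Q1)*(x ^ Q2) + (x ^ q)*(x ^ Q1)*((x ^ q) ^ Q2) - (x ^ q)*(x ^ Q1)*(x ^ Q2) + x*((x ^ q) ^ Q1)*((x ^ q) ^ Q2) + x*((x ^ q) ^ Q1)*(x ^ Q2) - x*(x ^ Q1)*((x ^ q) ^ Q2) + x*(x ^ Q1)*(x ^ Q2)) * h2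
end

section
/- Suppose m is odd. Then f_C(x) is a permutation polynomial of F_{q^2} if and only if (1+i)·(1+j) is odd (equivalently, i and j are both even) and gcd(Q1 + Q2 + 1, q − 1) = 1. -/
private def fC (q Q1 Q2 : ℕ) {F : Type*} [Field F] (x : F) : F :=
  x ^ (q * (Q1 + Q2 + 1)) + x ^ (q * Q1 + Q2 + 1) + x ^ (q * Q2 + Q1 + 1) +
    x ^ (q + Q1 + Q2) + x ^ (Q1 + Q2 + 1)

private lemma fC_scale {F : Type*} [Field F] (q Q1 Q2 : ℕ) (u x : F) (hx : x ^ q = u * x) :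
    fC q Q1 Q2 x =
      (u ^ (Q1 + Q2 + 1) + u ^ Q1 + u ^ Q2 + u + 1) * x ^ (Q1 + Q2 + 1) := by
  have h1 : x ^ (q * (Q1 + Q2 + 1)) = (u * x) ^ (Q1 + Q2 + 1) := by rw [pow_mul, hx]
  have h2 : x ^ (q * Q1 + Q2 + 1) = (u * x) ^ Q1 * x ^ Q2 * x := by
    rw [pow_succ, pow_add, pow_mul, hx]
  have h3 : x ^ (q * Q2 + Q1 + 1) = (u * x) ^ Q2 * x ^ Q1 * x := by
    rw [pow_succ, pow_add, pow_mul, hx]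
  have h4 : x ^ (q + Q1 + Q2) = (u * x) * x ^ Q1 * x ^ Q2 := by
    rw [pow_add, pow_add, hx]
  have h5 : x ^ (Q1 + Q2 + 1) = x ^ Q1 * x ^ Q2 * x := by rw [pow_succ, pow_add]
  rw [fC, h1, h2, h3, h4, mul_pow, h5]
  ring

private lemma fC_mul {F : Type*} [Field F] (q Q1 Q2 : ℕ) (c w : F) (hc : c ^ q = c) :
    fC q Q1 Q2 (c * w) = c ^ (Q1 + Q2 + 1) * fC q Q1 Q2 w := by
  have hc1 : ∀ n : ℕ, c ^ (q * n) = c ^ n := fun n => by rw [pow_mul, hc]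
  have e1 : c ^ (q * (Q1 + Q2 + 1)) = c ^ (Q1 + Q2 + 1) := hc1 _
  have e2 : c ^ (q * Q1 + Q2 + 1) = c ^ (Q1 + Q2 + 1) := by
    rw [pow_succ, pow_add, hc1]; ring
  have e3 : c ^ (q * Q2 + Q1 + 1) = c ^ (Q1 + Q2 + 1) := by
    rw [pow_succ, pow_add, hc1]; ring
  have e4 : c ^ (q + Q1 + Q2) = c ^ (Q1 + Q2 + 1) := by
    rw [pow_add, pow_add, hc]; ring
  simp only [fC, mul_pow, e1, e2, e3, e4]
  ring

/-- Theorem C, case (i): for `m` odd, `f_C` permutes `F_{q^2}` iff `(1+i)·(1+j)` is odd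
and `gcd(Q1 + Q2 + 1, q - 1) = 1`. -/
theorem fC_perm_iff_of_odd
    (m i j : ℕ) (hm : 0 < m) (hi : 0 < i) (hj : 0 < j)
    (q Q1 Q2 : ℕ) (hq : q = 2 ^ m) (hQ1 : Q1 = 2 ^ i) (hQ2 : Q2 = 2 ^ j)
    (F : Type*) [Field F] [Fintype F] (hF : Fintype.card F = q ^ 2)
    (hmo : Odd m) :
    Function.Bijective (fun x : F =>
      x ^ (q * (Q1 + Q2 + 1)) + x ^ (q * Q1 + Q2 + 1) + x ^ (q * Q2 + Q1 + 1) +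
        x ^ (q + Q1 + Q2) + x ^ (Q1 + Q2 + 1)) ↔
      (Odd ((1 + i) * (1 + j)) ∧ Nat.gcd (Q1 + Q2 + 1) (q - 1) = 1) := by
  classical
  show Function.Bijective (fC q Q1 Q2 (F := F)) ↔ _
  -- basic numeric facts
  have hq2 : 2 ≤ q := by
    rw [hq]; calc 2 = 2 ^ 1 := rfl
    _ ≤ 2 ^ m := Nat.pow_le_pow_right (by norm_num) hm
  have hQ12 : 2 ≤ Q1 := by
    rw [hQ1]; calc 2 = 2 ^ 1 := rfl
    _ ≤ 2 ^ i := Nat.pow_le_pow_right (by norm_num) hi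
  have hQ22 : 2 ≤ Q2 := by
    rw [hQ2]; calc 2 = 2 ^ 1 := rfl
    _ ≤ 2 ^ j := Nat.pow_le_pow_right (by norm_num) hj
  -- characteristic 2
  have h2 : (2 : F) = 0 := by
    have hc : ((Fintype.card F : ℕ) : F) = 0 := Nat.cast_card_eq_zero F
    rw [hF] at hc
    push_cast at hc
    have hq0 : (q : F) = 0 := by
      have := pow_eq_zero_iff (M₀ := F) (a := (q : F)) (n := 2) (by norm_num)
      exact this.mp hc
    rw [hq] at hq0
    push_cast at hq0
    exact (pow_eq_zero_iff (by omega : m ≠ 0)).mp hq0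
  haveI hchar : CharP F 2 := by
    obtain ⟨p, hp⟩ := CharP.exists F
    haveI := hp
    have hpp : p.Prime := CharP.char_is_prime F p
    have hpd : p ∣ 2 := by
      rw [← CharP.cast_eq_zero_iff F p 2] ; exact_mod_cast h2
    rcases (Nat.dvd_prime Nat.prime_two).mp hpd with h | h
    · exact absurd h hpp.ne_one
    · rwa [h] at hp
  haveI : Fact (Nat.Prime 2) := ⟨Nat.prime_two⟩
  have frob : ∀ (n : ℕ) (x y : F), (x + y) ^ (2 ^ n) = x ^ (2 ^ n) + y ^ (2 ^ n) :=
    fun n x y => add_pow_char_pow x y 2 n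
  have frobq : ∀ x y : F, (x + y) ^ q = x ^ q + y ^ q := by
    intro x y; rw [hq]; exact frob m x y
  have frobQ1 : ∀ x y : F, (x + y) ^ Q1 = x ^ Q1 + y ^ Q1 := by
    intro x y; rw [hQ1]; exact frob i x y
  have frobQ2 : ∀ x y : F, (x + y) ^ Q2 = x ^ Q2 + y ^ Q2 := by
    intro x y; rw [hQ2]; exact frob j x y
  have hpowcard : ∀ x : F, x ^ (q * q) = x := by
    intro x
    have h := FiniteField.pow_card x
    rwa [hF, pow_two] at h
  -- nat: powers of 2 mod 3
  have h4k : ∀ k : ℕ, ∃ u, 4 ^ k = 3 * u + 1 := by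
    intro k
    induction k with
    | zero => exact ⟨0, rfl⟩
    | succ n ih =>
      obtain ⟨u, hu⟩ := ih
      exact ⟨4 * u + 1, by rw [pow_succ, hu]; ring⟩
  have h2k : ∀ k : ℕ, (2:ℕ) ^ (k + k) = 4 ^ k := by
    intro k; rw [← two_mul, pow_mul]; norm_num
  have h2k' : ∀ k : ℕ, (2:ℕ) ^ (2 * k) = 4 ^ k := by
    intro k; rw [pow_mul]; norm_num
  have hpow2odd : ∀ n : ℕ, Odd n → ∃ t, (2:ℕ) ^ n = 3 * t + 2 := by
    rintro n ⟨k, rfl⟩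
    obtain ⟨u, hu⟩ := h4k k
    refine ⟨2 * u, ?_⟩
    rw [pow_succ, h2k', hu]; ring
  have hpow2even : ∀ n : ℕ, Even n → ∃ t, (2:ℕ) ^ n = 3 * t + 1 := by
    rintro n ⟨k, rfl⟩
    obtain ⟨u, hu⟩ := h4k k
    exact ⟨u, by rw [h2k, hu]⟩
  -- the cube root of unity ω
  have h3card : (3:ℕ) ∣ Fintype.card Fˣ := by
    have hq4 : q ^ 2 = 4 ^ m := by
      rw [hq, show (4:ℕ) = 2 ^ 2 from rfl, ← pow_mul, ← pow_mul, mul_comm]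
    rw [Fintype.card_units, hF, hq4]
    simpa using Nat.sub_dvd_pow_sub_pow 4 1 m
  haveI : Fact (Nat.Prime 3) := ⟨by norm_num⟩
  obtain ⟨ζ, hζ⟩ := exists_prime_orderOf_dvd_card 3 h3card
  set ω : F := (ζ : F) with hωdef
  have hω3 : ω ^ 3 = 1 := by
    have h := pow_orderOf_eq_one ζ
    rw [hζ] at h
    have := congrArg (Units.val) h
    push_cast at this
    exact this
  have hωne1 : ω ≠ 1 := by
    intro h
    have : ζ = 1 := Units.ext h
    rw [this] at hζ
    simp at hζ
  have hω : ω ^ 2 = ω + 1 := by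
    have h0 : (ω - 1) * (ω ^ 2 + ω + 1) = 0 := by linear_combination hω3
    rcases mul_eq_zero.mp h0 with h | h
    · exact absurd (by linear_combination h) hωne1
    · linear_combination h - (ω + 1) * h2
  have hωp1 : ∀ t : ℕ, ω ^ (3 * t + 1) = ω := by
    intro t; rw [pow_add, pow_mul, hω3, one_pow, one_mul, pow_one]
  have hωp2 : ∀ t : ℕ, ω ^ (3 * t + 2) = ω ^ 2 := by
    intro t; rw [pow_add, pow_mul, hω3, one_pow, one_mul]
  have hωq : ω ^ q = ω ^ 2 := by
    obtain ⟨t, ht⟩ := hpow2odd m hmo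
    rw [hq, ht]; exact hωp2 t
  have hωnf : ω ^ q ≠ ω := by
    rw [hωq, hω]; intro h
    exact (one_ne_zero : (1:F) ≠ 0) (by linear_combination h)
  have hωq1 : ω ^ (q + 1) = 1 := by
    rw [pow_succ, hωq]; linear_combination hω3
  -- fixed-point helpers
  have hfixmul : ∀ x y : F, x ^ q = x → y ^ q = y → (x * y) ^ q = x * y := by
    intro x y hx hy; rw [mul_pow, hx, hy]
  have hfixadd : ∀ x y : F, x ^ q = x → y ^ q = y → (x + y) ^ q = x + y := by
    intro x y hx hy; rw [frobq, hx, hy]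
  have hfixpow : ∀ (x : F) (n : ℕ), x ^ q = x → (x ^ n) ^ q = x ^ n := by
    intro x n hx; rw [← pow_mul, mul_comm, pow_mul, hx]
  have hone : (1 : F) ^ q = 1 := one_pow q
  have hω2q : (ω ^ 2) ^ q = ω := by
    rw [← pow_mul, mul_comm, pow_mul, hωq]
    linear_combination ω * hω3
  -- the parametrization of μ_{q+1} \ {1}
  have hmk : ∀ u : F, u ≠ 1 → u ^ (q + 1) = 1 →
      ∃ z : F, z ^ q = z ∧ (z + ω) ^ q = u * (z + ω) ∧ z + ω ≠ 0 := by
    intro u hu1 huq1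
    have hu0 : u ≠ 0 := by
      intro h; rw [h, zero_pow (by omega : q + 1 ≠ 0)] at huq1
      exact zero_ne_one huq1
    have h1u : (1 : F) + u ≠ 0 := by
      intro h; exact hu1 (by linear_combination h - h2)
    have huq : u ^ q * u = 1 := by rw [← pow_succ]; exact huq1
    have h1uq : (1 : F) + u ^ q ≠ 0 := by
      intro h
      have hval : u * ((1 : F) + u ^ q) = 1 + u := by linear_combination huq
      rw [h, mul_zero] at hval
      exact h1u hval.symm
    set z : F := (u * ω + ω ^ 2) * (1 + u)⁻¹ with hzdef
    have hz1 : z * (1 + u) = u * ω + ω ^ 2 := by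
      rw [hzdef, mul_assoc, inv_mul_cancel₀ h1u, mul_one]
    have hzq : z ^ q = z := by
      have e2 : (u * ω + ω ^ 2) ^ q = u ^ q * ω ^ 2 + ω := by
        rw [frobq, mul_pow, hωq, hω2q]
      have e3 : ((1 : F) + u) ^ q = 1 + u ^ q := by rw [frobq, one_pow]
      rw [hzdef, mul_pow, inv_pow, e2, e3, ← div_eq_mul_inv, ← div_eq_mul_inv,
        div_eq_div_iff h1uq h1u]
      linear_combination (ω ^ 2 - ω) * huq
    refine ⟨z, hzq, ?_, ?_⟩
    · rw [frobq, hzq, hωq]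
      linear_combination hz1 + (ω ^ 2 - u * z) * h2
    · intro h
      have hωz : ω = z := by linear_combination h - z * h2
      exact hωnf (by rw [hωz, hzq])
  -- decomposition of a nonzero element
  have hdecomp : ∀ x : F, x ≠ 0 → ∃ c w : F, c ^ q = c ∧ c ≠ 0 ∧ x = c * w ∧
      (w = 1 ∨ ∃ z : F, z ^ q = z ∧ w = z + ω) := by
    intro x hx
    have hxq0 : x ^ q ≠ 0 := pow_ne_zero q hx
    set u : F := x ^ q * x⁻¹ with hu
    have hux : u * x = x ^ q := by
      rw [hu, mul_assoc, inv_mul_cancel₀ hx, mul_one]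
    have huq1 : u ^ (q + 1) = 1 := by
      rw [pow_succ, hu, mul_pow, inv_pow, ← pow_mul, hpowcard]
      field_simp
    by_cases hu1 : u = 1
    · refine ⟨x, 1, ?_, hx, (mul_one x).symm, Or.inl rfl⟩
      rw [← hux, hu1, one_mul]
    · obtain ⟨z, hz, hwq, hwne⟩ := hmk u hu1 huq1
      have hu0 : u ≠ 0 := by
        intro h; rw [h, zero_pow (by omega : q + 1 ≠ 0)] at huq1
        exact zero_ne_one huq1
      refine ⟨x * (z + ω)⁻¹, z + ω, ?_, mul_ne_zero hx (inv_ne_zero hwne), by field_simp,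
        Or.inr ⟨z, hz, rfl⟩⟩
      rw [mul_pow, inv_pow, hwq, ← hux, mul_inv_rev]
      field_simp
  have hf1 : fC q Q1 Q2 (1 : F) = 1 := by
    simp only [fC, one_pow]
    linear_combination 2 * h2
  have hf0 : fC q Q1 Q2 (0 : F) = 0 := by
    have n1 : q * (Q1 + Q2 + 1) ≠ 0 := Nat.mul_ne_zero (by omega) (by omega)
    simp only [fC, zero_pow n1, zero_pow (show q * Q1 + Q2 + 1 ≠ 0 by omega),
      zero_pow (show q * Q2 + Q1 + 1 ≠ 0 by omega), zero_pow (show q + Q1 + Q2 ≠ 0 by omega),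
      zero_pow (show Q1 + Q2 + 1 ≠ 0 by omega), add_zero]
  constructor
  · -- forward direction
    intro hb
    have hinj : Function.Injective (fC q Q1 Q2 (F := F)) := hb.injective
    constructor
    · -- parity
      by_contra hodd
      have hbr : ω ^ (Q1 + Q2 + 1) + ω ^ Q1 + ω ^ Q2 + ω + 1 = 0 := by
        have hss : ω ^ (Q1 + Q2 + 1) = ω ^ Q1 * ω ^ Q2 * ω := by
          rw [pow_succ, pow_add]
        rcases Nat.even_or_odd i with hie | hio <;> rcases Nat.even_or_odd j with hje | hjo
        · exfalso
          apply hodd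
          refine Odd.mul ?_ ?_
          · rw [add_comm]; exact Even.add_one hie
          · rw [add_comm]; exact Even.add_one hje
        · obtain ⟨t1, ht1⟩ := hpow2even i hie
          obtain ⟨t2, ht2⟩ := hpow2odd j hjo
          rw [hss, hQ1, hQ2, ht1, ht2, hωp1, hωp2]
          linear_combination (3 + ω + ω ^ 2) * hω + (2 + 3 * ω) * h2
        · obtain ⟨t1, ht1⟩ := hpow2odd i hio
          obtain ⟨t2, ht2⟩ := hpow2even j hje
          rw [hss, hQ1, hQ2, ht1, ht2, hωp1, hωp2]
          linear_combination (3 + ω + ω ^ 2) * hω + (2 + 3 * ω) * h2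
        · obtain ⟨t1, ht1⟩ := hpow2odd i hio
          obtain ⟨t2, ht2⟩ := hpow2odd j hjo
          rw [hss, hQ1, hQ2, ht1, ht2, hωp2, hωp2]
          linear_combination (5 + 2 * ω + ω ^ 2 + ω ^ 3) * hω + (3 + 4 * ω) * h2
      obtain ⟨z, hz, hwq, hwne⟩ := hmk ω hωne1 hωq1
      have hfz : fC q Q1 Q2 (z + ω) = 0 := by
        rw [fC_scale q Q1 Q2 ω (z + ω) hwq, hbr, zero_mul]
      exact hwne (hinj (show fC q Q1 Q2 (z + ω) = fC q Q1 Q2 0 by rw [hfz, hf0]))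
    · -- gcd
      by_contra hg
      have hsne : Q1 + Q2 + 1 ≠ 0 := by omega
      have hp : (Nat.gcd (Q1 + Q2 + 1) (q - 1)).minFac.Prime := Nat.minFac_prime hg
      set p := (Nat.gcd (Q1 + Q2 + 1) (q - 1)).minFac with hpdef
      have hps : p ∣ Q1 + Q2 + 1 :=
        (Nat.minFac_dvd _).trans (Nat.gcd_dvd_left _ _)
      have hpq : p ∣ q - 1 :=
        (Nat.minFac_dvd _).trans (Nat.gcd_dvd_right _ _)
      have hpcard : p ∣ Fintype.card Fˣ := by
        rw [Fintype.card_units, hF]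
        exact hpq.trans (by simpa using Nat.sub_dvd_pow_sub_pow q 1 2)
      haveI : Fact p.Prime := ⟨hp⟩
      obtain ⟨ξ, hξ⟩ := exists_prime_orderOf_dvd_card p hpcard
      set x : F := (ξ : F) with hxdef
      have hxp : x ^ p = 1 := by
        have h := pow_orderOf_eq_one ξ
        rw [hξ] at h
        have := congrArg (Units.val) h
        push_cast at this
        exact this
      have hxq1 : x ^ (q - 1) = 1 := by
        obtain ⟨t, ht⟩ := hpq
        rw [ht, pow_mul, hxp, one_pow]
      have hxs : x ^ (Q1 + Q2 + 1) = 1 := by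
        obtain ⟨t, ht⟩ := hps
        rw [ht, pow_mul, hxp, one_pow]
      have hxq : x ^ q = x := by
        rw [show q = q - 1 + 1 by omega, pow_succ, hxq1, one_mul]
      have hfx : fC q Q1 Q2 x = 1 := by
        rw [fC_scale q Q1 Q2 1 x (by rw [hxq, one_mul]), hxs, mul_one, one_pow]
        linear_combination 2 * h2
      have hx1 : x = 1 := hinj (show fC q Q1 Q2 x = fC q Q1 Q2 1 by rw [hfx, hf1])
      have : ξ = 1 := Units.ext hx1
      rw [this] at hξ
      simp at hξ
      exact hp.ne_one hξ.symm
  · -- backward direction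
    rintro ⟨hodd, hgcd⟩
    have hie : Even i := by
      rcases Nat.even_or_odd i with h | h
      · exact h
      · exfalso
        obtain ⟨k, hk⟩ := h
        exact (Nat.not_odd_iff_even.mpr (Even.mul_right ⟨k + 1, by omega⟩ (1 + j))) hodd
    have hje : Even j := by
      rcases Nat.even_or_odd j with h | h
      · exact h
      · exfalso
        obtain ⟨k, hk⟩ := h
        exact (Nat.not_odd_iff_even.mpr (Even.mul_left ⟨k + 1, by omega⟩ (1 + i))) hodd
    obtain ⟨ti, hti⟩ := hpow2even i hie
    have hωQ1 : ω ^ Q1 = ω := by rw [hQ1, hti]; exact hωp1 ti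
    obtain ⟨tj, htj⟩ := hpow2even j hje
    have hωQ2 : ω ^ Q2 = ω := by rw [hQ2, htj]; exact hωp1 tj
    have hsne : Q1 + Q2 + 1 ≠ 0 := by omega
    have hsinj : ∀ x y : F, x ^ q = x → y ^ q = y →
        x ^ (Q1 + Q2 + 1) = y ^ (Q1 + Q2 + 1) → x = y := by
      intro x y hx hy hxy
      by_cases hx0 : x = 0
      · subst hx0
        rw [zero_pow hsne] at hxy
        exact ((pow_eq_zero_iff hsne).mp hxy.symm).symm
      by_cases hy0 : y = 0
      · subst hy0
        rw [zero_pow hsne] at hxy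
        exact (pow_eq_zero_iff hsne).mp hxy
      have hxq1 : x ^ (q - 1) = 1 := by
        have hh : x ^ (q - 1) * x = 1 * x := by
          rw [← pow_succ, show q - 1 + 1 = q by omega, hx, one_mul]
        exact mul_right_cancel₀ hx0 hh
      have hyq1 : y ^ (q - 1) = 1 := by
        have hh : y ^ (q - 1) * y = 1 * y := by
          rw [← pow_succ, show q - 1 + 1 = q by omega, hy, one_mul]
        exact mul_right_cancel₀ hy0 hh
      have he1 : (x * y⁻¹) ^ (Q1 + Q2 + 1) = 1 := by
        rw [mul_pow, inv_pow, hxy, mul_inv_cancel₀ (pow_ne_zero _ hy0)]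
      have he2 : (x * y⁻¹) ^ (q - 1) = 1 := by
        rw [mul_pow, inv_pow, hxq1, hyq1, inv_one, mul_one]
      have hd : orderOf (x * y⁻¹) ∣ 1 := by
        rw [← hgcd]
        exact Nat.dvd_gcd (orderOf_dvd_of_pow_eq_one he1) (orderOf_dvd_of_pow_eq_one he2)
      have h1 : x * y⁻¹ = 1 := orderOf_eq_one_iff.mp (Nat.dvd_one.mp hd)
      rw [← div_eq_mul_inv] at h1
      exact div_eq_one_iff_eq hy0 |>.mp h1
    have hcomp : ∀ z : F, z ^ q = z → fC q Q1 Q2 (z + ω) =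
        z^Q1*z^Q2*z + ω*(z^Q1*z^Q2*z + (z^Q1+1)*(z^Q2+1)*(z+1)) := by
      intro z hz
      have hwq : (z+ω)^q = z + ω^2 := by rw [frobq, hz, hωq]
      have hwQ1 : (z+ω)^Q1 = z^Q1 + ω := by rw [frobQ1, hωQ1]
      have hwQ2 : (z+ω)^Q2 = z^Q2 + ω := by rw [frobQ2, hωQ2]
      have hω2Q1 : (ω^2)^Q1 = ω^2 := by rw [← pow_mul, mul_comm, pow_mul, hωQ1]
      have hω2Q2 : (ω^2)^Q2 = ω^2 := by rw [← pow_mul, mul_comm, pow_mul, hωQ2]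
      have hwqQ1 : (z+ω)^(q*Q1) = z^Q1 + ω^2 := by rw [pow_mul, hwq, frobQ1, hω2Q1]
      have hwqQ2 : (z+ω)^(q*Q2) = z^Q2 + ω^2 := by rw [pow_mul, hwq, frobQ2, hω2Q2]
      have t1 : (z+ω)^(q*(Q1+Q2+1)) = (z^Q1+ω^2) * ((z^Q2+ω^2) * (z+ω^2)) := by
        rw [show q*(Q1+Q2+1) = q*Q1 + (q*Q2 + q) by ring, pow_add, pow_add, hwqQ1, hwqQ2, hwq]
      have t2 : (z+ω)^(q*Q1+Q2+1) = (z^Q1+ω^2) * (z^Q2+ω) * (z+ω) := by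
        rw [pow_succ, pow_add, hwqQ1, hwQ2]
      have t3 : (z+ω)^(q*Q2+Q1+1) = (z^Q2+ω^2) * (z^Q1+ω) * (z+ω) := by
        rw [pow_succ, pow_add, hwqQ2, hwQ1]
      have t4 : (z+ω)^(q+Q1+Q2) = (z+ω^2) * (z^Q1+ω) * (z^Q2+ω) := by
        rw [pow_add, pow_add, hwq, hwQ1, hwQ2]
      have t5 : (z+ω)^(Q1+Q2+1) = (z^Q1+ω) * (z^Q2+ω) * (z+ω) := by
        rw [pow_succ, pow_add, hwQ1, hwQ2]
      show (z+ω)^(q*(Q1+Q2+1)) + (z+ω)^(q*Q1+Q2+1) + (z+ω)^(q*Q2+Q1+1) +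
        (z+ω)^(q+Q1+Q2) + (z+ω)^(Q1+Q2+1) = _
      rw [t1, t2, t3, t4, t5]
      linear_combination (12 + 7*ω + 5*ω^2 + ω^3 + ω^4 + 6*z + 3*z*ω + z*ω^2 + 6*z^Q2 + 3*z^Q2*ω + z^Q2*ω^2 + 2*z^Q2*z + 6*z^Q1 + 3*z^Q1*ω + z^Q1*ω^2 + 2*z^Q1*z + 2*z^Q1*z^Q2) * hω + (6 + 9*ω + 3*z + 4*z*ω + 3*z^Q2 + 4*z^Q2*ω + z^Q2*z + 2*z^Q2*z*ω + 3*z^Q1 + 4*z^Q1*ω + z^Q1*z + 2*z^Q1*z*ω + z^Q1*z^Q2 + 2*z^Q1*z^Q2*ω + 2*z^Q1*z^Q2*z - z^Q1*z^Q2*z*ω) * h2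
    have hPfix : ∀ z : F, z ^ q = z → (z^Q1*z^Q2*z)^q = z^Q1*z^Q2*z := by
      intro z hz
      exact hfixmul _ _ (hfixmul _ _ (hfixpow z Q1 hz) (hfixpow z Q2 hz)) hz
    have hSfix : ∀ z : F, z ^ q = z → ((z^Q1+1)*(z^Q2+1)*(z+1))^q = (z^Q1+1)*(z^Q2+1)*(z+1) := by
      intro z hz
      exact hfixmul _ _ (hfixmul _ _ (hfixadd _ _ (hfixpow z Q1 hz) hone)
        (hfixadd _ _ (hfixpow z Q2 hz) hone)) (hfixadd _ _ hz hone)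
    have hfCq : ∀ z : F, z ^ q = z → (fC q Q1 Q2 (z + ω))^q =
        z^Q1*z^Q2*z + ω^2*(z^Q1*z^Q2*z + (z^Q1+1)*(z^Q2+1)*(z+1)) := by
      intro z hz
      rw [hcomp z hz, frobq, hPfix z hz, mul_pow, hωq, frobq, hPfix z hz, hSfix z hz]
    have hRne : ∀ z : F, z ^ q = z → z^Q1*z^Q2*z + (z^Q1+1)*(z^Q2+1)*(z+1) ≠ 0 := by
      intro z hz h0
      have e1 : z^(Q1+Q2+1) = z^Q1*z^Q2*z := by rw [pow_succ, pow_add]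
      have e2 : (z+1)^(Q1+Q2+1) = (z^Q1+1)*(z^Q2+1)*(z+1) := by
        rw [pow_succ, pow_add, frobQ1, frobQ2, one_pow, one_pow]
      have key : z^(Q1+Q2+1) = (z+1)^(Q1+Q2+1) := by
        rw [e1, e2]
        linear_combination h0 - ((z^Q1+1)*(z^Q2+1)*(z+1)) * h2
      have h1 := hsinj z (z+1) hz (hfixadd z 1 hz hone) key
      exact (one_ne_zero : (1:F) ≠ 0) (by linear_combination -h1)
    have hfne : ∀ z : F, z ^ q = z → fC q Q1 Q2 (z + ω) ≠ 0 := by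
      intro z hz h0
      rw [hcomp z hz] at h0
      have hR := hRne z hz
      have hωeq : ω = (z^Q1*z^Q2*z) * (z^Q1*z^Q2*z + (z^Q1+1)*(z^Q2+1)*(z+1))⁻¹ := by
        rw [eq_mul_inv_iff_mul_eq₀ hR]
        linear_combination h0 - (z^Q1*z^Q2*z) * h2
      have hRfix : (z^Q1*z^Q2*z + (z^Q1+1)*(z^Q2+1)*(z+1))^q
          = z^Q1*z^Q2*z + (z^Q1+1)*(z^Q2+1)*(z+1) := by
        rw [frobq, hPfix z hz, hSfix z hz]
      apply hωnf
      rw [hωeq, mul_pow, inv_pow, hPfix z hz, hRfix]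
    refine Finite.injective_iff_bijective.mp ?_
    intro x y hfxy
    by_cases hx0 : x = 0 <;> by_cases hy0 : y = 0
    · rw [hx0, hy0]
    · exfalso
      rw [hx0, hf0] at hfxy
      obtain ⟨c, w, hcq, hc0, hye, hw⟩ := hdecomp y hy0
      rw [hye, fC_mul q Q1 Q2 c w hcq] at hfxy
      have hcs : c^(Q1+Q2+1) ≠ 0 := pow_ne_zero _ hc0
      rcases hw with rfl | ⟨z, hz, rfl⟩
      · rw [hf1, mul_one] at hfxy; exact hcs hfxy.symm
      · rcases mul_eq_zero.mp hfxy.symm with h | h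
        · exact hcs h
        · exact hfne z hz h
    · exfalso
      rw [hy0, hf0] at hfxy
      obtain ⟨c, w, hcq, hc0, hxe, hw⟩ := hdecomp x hx0
      rw [hxe, fC_mul q Q1 Q2 c w hcq] at hfxy
      have hcs : c^(Q1+Q2+1) ≠ 0 := pow_ne_zero _ hc0
      rcases hw with rfl | ⟨z, hz, rfl⟩
      · rw [hf1, mul_one] at hfxy; exact hcs hfxy
      · rcases mul_eq_zero.mp hfxy with h | h
        · exact hcs h
        · exact hfne z hz h
    · obtain ⟨c1, w1, hc1q, hc10, hxe, hw1⟩ := hdecomp x hx0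
      obtain ⟨c2, w2, hc2q, hc20, hye, hw2⟩ := hdecomp y hy0
      rw [hxe, hye, fC_mul q Q1 Q2 c1 w1 hc1q, fC_mul q Q1 Q2 c2 w2 hc2q] at hfxy
      have hfxyq := congrArg (fun t : F => t ^ q) hfxy
      simp only [mul_pow] at hfxyq
      rw [hfixpow c1 _ hc1q, hfixpow c2 _ hc2q] at hfxyq
      have hc1s : c1^(Q1+Q2+1) ≠ 0 := pow_ne_zero _ hc10
      have hc2s : c2^(Q1+Q2+1) ≠ 0 := pow_ne_zero _ hc20
      have hωsub : ω^2 - ω = 1 := by linear_combination hω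
      have hw12 : w1 = w2 := by
        rcases hw1 with rfl | ⟨z1, hz1, rfl⟩ <;> rcases hw2 with rfl | ⟨z2, hz2, rfl⟩
        · rfl
        · exfalso
          rw [hf1, mul_one, hcomp z2 hz2] at hfxy
          rw [hf1, one_pow, mul_one, hfCq z2 hz2] at hfxyq
          have h5 : c2^(Q1+Q2+1) * ((ω^2-ω) * (z2^Q1*z2^Q2*z2 + (z2^Q1+1)*(z2^Q2+1)*(z2+1))) = 0 := by
            linear_combination hfxy - hfxyq
          rcases mul_eq_zero.mp h5 with h | h
          · exact hc2s h
          · rcases mul_eq_zero.mp h with h' | h'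
            · rw [hωsub] at h'; exact (one_ne_zero : (1:F) ≠ 0) h'
            · exact hRne z2 hz2 h'
        · exfalso
          rw [hf1, mul_one, hcomp z1 hz1] at hfxy
          rw [hf1, one_pow, mul_one, hfCq z1 hz1] at hfxyq
          have h5 : c1^(Q1+Q2+1) * ((ω^2-ω) * (z1^Q1*z1^Q2*z1 + (z1^Q1+1)*(z1^Q2+1)*(z1+1))) = 0 := by
            linear_combination hfxyq - hfxy
          rcases mul_eq_zero.mp h5 with h | h
          · exact hc1s h
          · rcases mul_eq_zero.mp h with h' | h'
            · rw [hωsub] at h'; exact (one_ne_zero : (1:F) ≠ 0) h'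
            · exact hRne z1 hz1 h'
        · rw [hcomp z1 hz1, hcomp z2 hz2] at hfxy
          rw [hfCq z1 hz1, hfCq z2 hz2] at hfxyq
          set P1 : F := z1^Q1*z1^Q2*z1 with hP1def
          set S1 : F := (z1^Q1+1)*(z1^Q2+1)*(z1+1) with hS1def
          set P2 : F := z2^Q1*z2^Q2*z2 with hP2def
          set S2 : F := (z2^Q1+1)*(z2^Q2+1)*(z2+1) with hS2def
          have h3 : c1^(Q1+Q2+1)*c2^(Q1+Q2+1)*((P1+ω*(P1+S1))*(P2+ω^2*(P2+S2))) =
              c1^(Q1+Q2+1)*c2^(Q1+Q2+1)*((P2+ω*(P2+S2))*(P1+ω^2*(P1+S1))) := by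
            linear_combination (c2^(Q1+Q2+1)*(P2+ω^2*(P2+S2))) * hfxy -
              (c2^(Q1+Q2+1)*(P2+ω*(P2+S2))) * hfxyq
          have h4 := mul_left_cancel₀ (mul_ne_zero hc1s hc2s) h3
          have h5 : (ω^2-ω) * (P1*(P2+S2) - P2*(P1+S1)) = 0 := by linear_combination h4
          have h6 : P1*(P2+S2) = P2*(P1+S1) := by
            rcases mul_eq_zero.mp h5 with h | h
            · rw [hωsub] at h; exact absurd h one_ne_zero
            · exact sub_eq_zero.mp h
          have e1 : ∀ zz : F, zz^(Q1+Q2+1) = zz^Q1*zz^Q2*zz := fun zz => by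
            rw [pow_succ, pow_add]
          have e2 : ∀ zz : F, (zz+1)^(Q1+Q2+1) = (zz^Q1+1)*(zz^Q2+1)*(zz+1) := fun zz => by
            rw [pow_succ, pow_add, frobQ1, frobQ2, one_pow, one_pow]
          have key : (z1*(z2+1))^(Q1+Q2+1) = (z2*(z1+1))^(Q1+Q2+1) := by
            rw [mul_pow, mul_pow, e2 z2, e2 z1, e1 z1, e1 z2]
            linear_combination h6
          have hz12 : z1*(z2+1) = z2*(z1+1) :=
            hsinj _ _ (hfixmul _ _ hz1 (hfixadd _ _ hz2 hone))
              (hfixmul _ _ hz2 (hfixadd _ _ hz1 hone)) key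
          have hzz : z1 = z2 := by linear_combination hz12
          rw [hzz]
      rw [hw12] at hfxy
      have hfw2 : fC q Q1 Q2 w2 ≠ 0 := by
        rcases hw2 with rfl | ⟨z2, hz2, rfl⟩
        · rw [hf1]; exact one_ne_zero
        · exact hfne z2 hz2
      have hcs : c1^(Q1+Q2+1) = c2^(Q1+Q2+1) := mul_right_cancel₀ hfw2 hfxy
      rw [hxe, hye, hsinj c1 c2 hc1q hc2q hcs, hw12]
end
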